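/- arXiv:0906.5212 — 8 statements merged into one kernel-verified Lean document; each statement's English description precedes it below -/
import Mathlib

section
/- If C ⊆ ℝ^p is a lattice point free convex set (no integer point in its relative interior) and r ∈ ℚ^p is a rational vector in the recession cone of C, then C + span{r} is also lattice point free. -/
/-!
Every point `x` of `ri (C + span {r})` has the form `y + t • r` with `y ∈ ri C`: push `x` a
little beyond a point `w ∈ ri C` to a point `c + l` of `C + span {r}`; then `x` minus a multiple
of `r` lies on the segment from `w` to `c` but not at `c`, hence in `ri C`. Some multiple `N • r`
with `N ≥ 1` is integral, so if `x` is integral then so is `y + (t + k * N) • r` for every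
`k ∈ ℕ`. For `k` large the coefficient is nonnegative, and since `r` is a recession direction the
point lies in `ri C`, which contradicts lattice freeness of `C`.
-/

open Pointwise

/-- A convex set `C ⊆ ℝ^p` is lattice point free if its relative interior
contains no integer point. -/
def LatticeFree {p : ℕ} (C : Set (Fin p → ℝ)) : Prop :=
  ∀ x ∈ intrinsicInterior ℝ C, ¬ ∀ i, ∃ z : ℤ, x i = (z : ℝ)

open Filter Topology

section IntrinsicInterior

variable {V : Type*} [NormedAddCommGroup V] [NormedSpace ℝ V] {s : Set V}

theorem mem_intrinsicInterior_iff_exists_ball {x : V} :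
    x ∈ intrinsicInterior ℝ s ↔
      x ∈ affineSpan ℝ s ∧ ∃ ε > 0, ∀ z ∈ affineSpan ℝ s, dist z x < ε → z ∈ s := by
  constructor
  · rintro ⟨⟨x, hx⟩, hmem, rfl⟩
    rw [mem_interior_iff_mem_nhds, Metric.mem_nhds_iff] at hmem
    obtain ⟨ε, hε, hball⟩ := hmem
    exact ⟨hx, ε, hε, fun z hz hzx => hball (show (⟨z, hz⟩ : affineSpan ℝ s) ∈ _ from hzx)⟩
  · rintro ⟨hx, ε, hε, hball⟩
    refine ⟨⟨x, hx⟩, ?_, rfl⟩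
    rw [mem_interior_iff_mem_nhds, Metric.mem_nhds_iff]
    exact ⟨ε, hε, fun z hz => hball z z.2 hz⟩

theorem Convex.combo_intrinsicInterior_self_mem_intrinsicInterior (hs : Convex ℝ s) {x y : V}
    (hx : x ∈ intrinsicInterior ℝ s) (hy : y ∈ s) {a b : ℝ} (ha : 0 < a) (hb : 0 ≤ b)
    (hab : a + b = 1) : a • x + b • y ∈ intrinsicInterior ℝ s := by
  rw [mem_intrinsicInterior_iff_exists_ball] at hx ⊢
  obtain ⟨hxA, ε, hε, hball⟩ := hx
  have hyA := subset_affineSpan ℝ s hy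
  have hb' : b = 1 - a := by linarith
  subst hb'
  set m := a • x + (1 - a) • y
  have hmA : m ∈ affineSpan ℝ s := by
    convert (affineSpan ℝ s).smul_vsub_vadd_mem a hxA hyA hyA using 1
    simp only [m, vsub_eq_sub, vadd_eq_add]; module
  refine ⟨hmA, a * ε, by positivity, fun z hzA hzm => ?_⟩
  -- the homothety with centre `y` and ratio `a` maps the `ε`-ball around `x` onto the
  -- `a * ε`-ball around `m`
  set x' := a⁻¹ • (z - m) + x
  have hx'A : x' ∈ affineSpan ℝ s := by
    simpa using (affineSpan ℝ s).smul_vsub_vadd_mem a⁻¹ hzA hmA hxA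
  have hx'x : dist x' x < ε := by
    rw [dist_eq_norm, show x' - x = a⁻¹ • (z - m) by simp [x'], norm_smul,
      Real.norm_of_nonneg (inv_nonneg.2 ha.le), ← dist_eq_norm, inv_mul_lt_iff₀ ha]
    exact hzm
  have hz : z = a • x' + (1 - a) • y := by
    simp only [x', m]
    match_scalars <;> field_simp <;> ring
  rw [hz]
  exact hs (hball x' hx'A hx'x) hy ha.le hb (by ring)

theorem exists_pos_add_smul_sub_mem_of_mem_intrinsicInterior {x w : V}
    (hx : x ∈ intrinsicInterior ℝ s) (hw : w ∈ s) :
    ∃ δ : ℝ, 0 < δ ∧ x + δ • (x - w) ∈ s := by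
  rw [mem_intrinsicInterior_iff_exists_ball] at hx
  obtain ⟨hxA, ε, hε, hball⟩ := hx
  have hline : Tendsto (fun t : ℝ => x + t • (x - w)) (𝓝 0) (𝓝 x) := by
    have hcont : Continuous fun t : ℝ => x + t • (x - w) := by fun_prop
    simpa using hcont.tendsto 0
  have hnear : ∀ᶠ t in 𝓝[>] (0 : ℝ), 0 < t ∧ x + t • (x - w) ∈ Metric.ball x ε :=
    eventually_mem_nhdsWithin.and
      (nhdsWithin_le_nhds (hline.eventually (Metric.ball_mem_nhds x hε)))
  obtain ⟨δ, hδ, hδε⟩ := hnear.exists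
  refine ⟨δ, hδ, hball _ ?_ hδε⟩
  simpa [add_comm] using (affineSpan ℝ s).smul_vsub_vadd_mem δ hxA (subset_affineSpan ℝ s hw) hxA

theorem Convex.add_smul_mem_intrinsicInterior {r y : V} (hs : Convex ℝ s)
    (hrec : ∀ x ∈ s, ∀ μ : ℝ, 0 ≤ μ → x + μ • r ∈ s) (hy : y ∈ intrinsicInterior ℝ s)
    {μ : ℝ} (hμ : 0 ≤ μ) : y + μ • r ∈ intrinsicInterior ℝ s := by
  have hfar : y + (2 * μ) • r ∈ s := hrec y (intrinsicInterior_subset hy) _ (by positivity)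
  convert hs.combo_intrinsicInterior_self_mem_intrinsicInterior hy hfar (a := 1 / 2) (b := 1 / 2)
    (by norm_num) (by norm_num) (by norm_num) using 1
  module

theorem Convex.intrinsicInterior_add_submodule_subset [FiniteDimensional ℝ V] (hs : Convex ℝ s)
    (L : Submodule ℝ V) :
    intrinsicInterior ℝ (s + (L : Set V)) ⊆ intrinsicInterior ℝ s + (L : Set V) := by
  intro x hx
  obtain ⟨c₀, hc₀, -⟩ := Set.mem_add.1 (intrinsicInterior_subset hx)
  obtain ⟨w, hw⟩ := Set.Nonempty.intrinsicInterior hs ⟨c₀, hc₀⟩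
  obtain ⟨δ, hδ, c, hc, l, hl, hcl : c + l = _⟩ :=
    exists_pos_add_smul_sub_mem_of_mem_intrinsicInterior hx
      (Set.subset_add_left s L.zero_mem (intrinsicInterior_subset hw))
  -- `x` divides the segment from `w` to `c + l = x + δ • (x - w)` in the ratio `δ : 1`
  have h1δ : (1 + δ) ≠ 0 := by positivity
  refine ⟨(δ / (1 + δ)) • w + (1 / (1 + δ)) • c,
    hs.combo_intrinsicInterior_self_mem_intrinsicInterior hw hc (by positivity) (by positivity)
      (by field_simp; ring), (1 + δ)⁻¹ • l, L.smul_mem _ hl, ?_⟩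
  calc (δ / (1 + δ)) • w + (1 / (1 + δ)) • c + (1 + δ)⁻¹ • l
      = (1 + δ)⁻¹ • (c + l + δ • w) := by match_scalars <;> field_simp
    _ = (1 + δ)⁻¹ • ((1 + δ) • x) := by rw [hcl]; module
    _ = x := inv_smul_smul₀ h1δ x

end IntrinsicInterior

theorem exists_pos_nat_mul_int_of_rat {ι : Type*} [Fintype ι] {r : ι → ℝ}
    (hr : ∀ i, ∃ q : ℚ, r i = q) : ∃ N : ℕ, 0 < N ∧ ∀ i, ∃ z : ℤ, N * r i = z := by
  choose q hq using hr
  refine ⟨∏ i, (q i).den, Finset.prod_pos fun i _ => (q i).den_pos, fun i => ?_⟩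
  obtain ⟨k, hk⟩ := Finset.dvd_prod_of_mem (fun j => (q j).den) (Finset.mem_univ i)
  refine ⟨k * (q i).num, ?_⟩
  have hnum : ((q i).den : ℝ) * q i = (q i).num := by exact_mod_cast Rat.den_mul_eq_num (q i)
  rw [hk, hq i]
  push_cast
  rw [← hnum]
  ring

theorem stmt0 {p : ℕ} (C : Set (Fin p → ℝ)) (hC : Convex ℝ C)
    (hfree : LatticeFree C) (r : Fin p → ℝ)
    (hrQ : ∀ i, ∃ q : ℚ, r i = (q : ℝ))
    (hrec : ∀ x ∈ C, ∀ μ : ℝ, 0 ≤ μ → x + μ • r ∈ C) :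
    LatticeFree (C + (Submodule.span ℝ ({r} : Set (Fin p → ℝ)) : Set (Fin p → ℝ))) := by
  obtain ⟨N, hN, hNr⟩ := exists_pos_nat_mul_int_of_rat hrQ
  rintro x hx hxℤ
  obtain ⟨y, hy, l, hl, rfl⟩ := hC.intrinsicInterior_add_submodule_subset _ hx
  obtain ⟨t, rfl⟩ := Submodule.mem_span_singleton.1 hl
  obtain ⟨k, hk⟩ := exists_nat_ge (-t)
  have hcoef : 0 ≤ t + k * N := by
    nlinarith [(Nat.one_le_cast (α := ℝ)).2 hN, (Nat.cast_nonneg k : (0 : ℝ) ≤ k)]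
  refine hfree _ (hC.add_smul_mem_intrinsicInterior hrec hy hcoef) fun i => ?_
  obtain ⟨a, ha⟩ := hxℤ i
  obtain ⟨b, hb⟩ := hNr i
  refine ⟨a + k * b, ?_⟩
  simp only [Pi.add_apply, Pi.smul_apply, smul_eq_mul] at ha ⊢
  push_cast
  rw [← ha, ← hb]
  ring
end

section
/- Let P = conv({v^i}_{i∈V}) + cone({r^j}_{j∈E}) be a rational polyhedron and L ⊂ ℝ^n a mixed integer split polyhedron. Then conv({x ∈ P : x ∉ int(L)}) ≠ P if and only if some vertex v^i of P lies in the interior of L. -/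
open Pointwise

/-- A rational polyhedron in `ℝ^p`. -/
def IsRatPolyhedron {p : ℕ} (C : Set (Fin p → ℝ)) : Prop :=
  ∃ (m : ℕ) (A : Fin m → Fin p → ℚ) (b : Fin m → ℚ),
    C = {x | ∀ i, ∑ j, (A i j : ℝ) * x j ≤ (b i : ℝ)}

/-- A split polyhedron: a maximal (wrt. inclusion among lattice point free
convex sets) lattice point free rational polyhedron. -/
def IsSplitPolyhedron {p : ℕ} (Lx : Set (Fin p → ℝ)) : Prop :=
  IsRatPolyhedron Lx ∧ LatticeFree Lx ∧
    ∀ C : Set (Fin p → ℝ), Convex ℝ C → LatticeFree C → Lx ⊆ C → C = Lx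

/-- A mixed integer split polyhedron in `ℝ^n` (first `p` coordinates integer
constrained): the cylinder over a split polyhedron in `ℝ^p`. -/
def IsMISplit {p n : ℕ} (h : p ≤ n) (L : Set (Fin n → ℝ)) : Prop :=
  ∃ Lx : Set (Fin p → ℝ), IsSplitPolyhedron Lx ∧
    L = {z | (fun i : Fin p => z (Fin.castLE h i)) ∈ Lx}

/-!
A vertex of `P` lying in `int L` is an extreme point of `P` that `R(L,P)` cannot contain, so
`R(L,P) ≠ P`. Conversely, suppose no vertex lies in `int L` and write `x ∈ P` as `a + d` with
`a ∈ conv V` and `d` in the cone; since `y ↦ y + d` is affine it suffices that `v + d ∈ R(L,P)` for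
every vertex `v`. If `v + d ∈ int L`, the ray `v + t d` (`t ≥ 1`) has to leave `int L`: otherwise
the projection of `d` is a recession direction of the split polyhedron, whose recession cone is a
linear space by maximality, which would put `v` itself in `int L`. So `v + d` lies on a segment
between two points of `P ∖ int L`.
-/

open Set Filter Topology

section

variable {ι M : Type*} [Fintype ι] [AddCommGroup M] [Module ℝ M]

def conicHull (r : ι → M) : Set M :=
  {d | ∃ μ : ι → ℝ, (∀ j, 0 ≤ μ j) ∧ d = ∑ j, μ j • r j}

variable {r : ι → M}

lemma smul_add_smul_mem_conicHull {x y : M} (hx : x ∈ conicHull r) (hy : y ∈ conicHull r)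
    {a b : ℝ} (ha : 0 ≤ a) (hb : 0 ≤ b) : a • x + b • y ∈ conicHull r := by
  obtain ⟨μ, hμ, rfl⟩ := hx
  obtain ⟨ν, hν, rfl⟩ := hy
  refine ⟨a • μ + b • ν, fun j => add_nonneg (mul_nonneg ha (hμ j)) (mul_nonneg hb (hν j)), ?_⟩
  simp [Finset.smul_sum, add_smul, smul_smul, Finset.sum_add_distrib]

lemma convex_conicHull : Convex ℝ (conicHull r) :=
  fun _ hx _ hy _ _ ha hb _ => smul_add_smul_mem_conicHull hx hy ha hb

lemma add_smul_mem_add_conicHull {s : Set M} {x d : M} (hx : x ∈ s + conicHull r)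
    (hd : d ∈ conicHull r) {t : ℝ} (ht : 0 ≤ t) : x + t • d ∈ s + conicHull r := by
  obtain ⟨a, ha, c, hc, rfl⟩ := hx
  exact ⟨a, ha, c + t • d, by simpa using smul_add_smul_mem_conicHull hc hd zero_le_one ht,
    (add_assoc _ _ _).symm⟩

end

lemma intrinsicInterior_subset_interior {E : Type*} [NormedAddCommGroup E] [NormedSpace ℝ E]
    [FiniteDimensional ℝ E] {s : Set E} (hs : (interior s).Nonempty) :
    intrinsicInterior ℝ s ⊆ interior s := by
  have hA : IsOpen (affineSpan ℝ s : Set E) := by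
    rw [affineSpan_eq_top_of_nonempty_interior (hs.mono (interior_mono (subset_convexHull ℝ s)))]
    exact isOpen_univ
  rintro _ ⟨x, hx, rfl⟩
  exact interior_mono (image_preimage_subset _ _)
    (hA.isOpenMap_subtype_val.image_interior_subset _ ⟨x, hx, rfl⟩)

lemma interior_preimage_comp {ι κ : Type*} [Fintype ι] [Fintype κ] {f : ι → κ}
    (hf : Function.Injective f) (S : Set (ι → ℝ)) :
    interior ((· ∘ f) ⁻¹' S : Set (κ → ℝ)) = (· ∘ f) ⁻¹' interior S := by
  let π : (κ → ℝ) →L[ℝ] (ι → ℝ) := (LinearMap.funLeft ℝ ℝ f).toContinuousLinearMap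
  have hπ : IsOpenMap π := π.isOpenMap (LinearMap.funLeft_surjective_of_injective ℝ ℝ f hf)
  exact (hπ.preimage_interior_eq_interior_preimage π.continuous S).symm

lemma nonpos_of_forall_add_mul_le {c s β : ℝ} (h : ∀ t : ℝ, 1 ≤ t → c + t * s ≤ β) : s ≤ 0 := by
  by_contra! hs
  have ht := le_max_right 1 ((β - c + 1) / s)
  rw [div_le_iff₀ hs] at ht
  linarith [h _ (le_max_left 1 ((β - c + 1) / s))]

lemma exists_rat_dotProduct_eq_zero_mem_nhds {ι κ : Type*} [Fintype κ] (B : ι → κ → ℚ)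
    {d : κ → ℝ} (hd : ∀ i, (fun j => (B i j : ℝ)) ⬝ᵥ d = 0) {U : Set (κ → ℝ)} (hU : U ∈ 𝓝 d) :
    ∃ h : κ → ℚ, (∀ i, B i ⬝ᵥ h = 0) ∧ (fun j => (h j : ℝ)) ∈ U := by
  classical
  -- In a `ℚ`-basis `β` of `ℝ`, `d = ∑ e, β e • c e` with every `c e` a rational kernel vector;
  -- replacing the reals `β e` by nearby rationals gives the rational kernel vector we want.
  let β := Module.Basis.ofVectorSpace ℚ ℝ
  let F := Finset.univ.sup fun j => (β.repr (d j)).support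
  let c : F → κ → ℚ := fun e j => β.coord e (d j)
  let Φ : (F → ℝ) → κ → ℝ := fun t => ∑ e, t e • (Rat.cast ∘ c e)
  have hd_eq : Φ (fun e => β e) = d := by
    ext j
    conv_rhs => rw [← β.linearCombination_repr (d j), Finsupp.linearCombination_apply,
      Finsupp.sum_of_support_subset _ (Finset.le_sup (f := fun j => (β.repr (d j)).support)
        (Finset.mem_univ j)) _ (by simp)]
    simpa [Φ, c, Rat.smul_def, mul_comm] using
      Finset.sum_attach F fun e => (β.repr (d j) e : ℝ) * β e
  have hker : ∀ e i, B i ⬝ᵥ c e = 0 := by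
    intro e i
    have : β.coord e ((fun j => (B i j : ℝ)) ⬝ᵥ d) = B i ⬝ᵥ c e := by
      simp [dotProduct, map_sum, ← Rat.smul_def, c]
    rw [← this, hd i, map_zero]
  obtain ⟨q, hq⟩ := (DenseRange.piMap fun _ => Rat.denseRange_cast).mem_nhds
    ((show Continuous Φ by fun_prop).continuousAt.preimage_mem_nhds (hd_eq ▸ hU))
  refine ⟨∑ e, q e • c e, fun i => by simp [dotProduct_sum, dotProduct_smul, hker], ?_⟩
  have : (fun j => ((∑ e, q e • c e) j : ℝ)) = Φ (Pi.map (fun _ => Rat.cast) q) := by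
    ext j
    simp [Φ, Pi.map]
  exact this ▸ hq

lemma exists_pos_nat_mul_eq_intCast {κ : Type*} [Fintype κ] (h : κ → ℚ) :
    ∃ N : ℕ, 0 < N ∧ ∃ g : κ → ℤ, ∀ j, (g j : ℚ) = N * h j := by
  classical
  refine ⟨∏ j, (h j).den, Finset.prod_pos fun j _ => (h j).pos,
    fun j => (h j).num * ∏ k ∈ Finset.univ.erase j, (h k).den, fun j => ?_⟩
  rw [← Finset.mul_prod_erase _ _ (Finset.mem_univ j)]
  push_cast
  rw [← Rat.mul_den_eq_num]
  ring

lemma exists_int_sign_dotProduct_eq {ι κ : Type*} [Finite ι] [Fintype κ] (A : ι → κ → ℚ)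
    (d : κ → ℝ) :
    ∃ g : κ → ℤ, ∀ i, SignType.sign ((fun j => (A i j : ℝ)) ⬝ᵥ (fun j => (g j : ℝ))) =
      SignType.sign ((fun j => (A i j : ℝ)) ⬝ᵥ d) := by
  let ℓ : ι → (κ → ℝ) → ℝ := fun i y => (fun j => (A i j : ℝ)) ⬝ᵥ y
  have hsign : ∀ᶠ y in 𝓝 d, ∀ i, ℓ i d ≠ 0 → SignType.sign (ℓ i y) = SignType.sign (ℓ i d) := by
    refine eventually_all.2 fun i => ?_
    by_cases hi : ℓ i d = 0
    · simp [hi]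
    have hc : ContinuousAt (fun y => SignType.sign (ℓ i y)) d :=
      (continuousAt_sign_of_ne_zero hi).comp (by fun_prop)
    filter_upwards [hc.eventually_mem ((isOpen_discrete {SignType.sign (ℓ i d)}).mem_nhds rfl)]
      with y hy _ using hy
  obtain ⟨h, hker, hh⟩ :=
    exists_rat_dotProduct_eq_zero_mem_nhds (fun i : {i // ℓ i d = 0} => A i) (fun i => i.2) hsign
  obtain ⟨N, hN, g, hg⟩ := exists_pos_nat_mul_eq_intCast h
  have hgh : (fun j => (g j : ℝ)) = (N : ℝ) • fun j => (h j : ℝ) := by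
    ext j
    simp only [Pi.smul_apply, smul_eq_mul]
    exact_mod_cast hg j
  refine ⟨g, fun i => ?_⟩
  rw [hgh, dotProduct_smul, smul_eq_mul, sign_mul, sign_pos (by positivity), one_mul]
  by_cases hi : ℓ i d = 0
  · have : (fun j => (A i j : ℝ)) ⬝ᵥ (fun j => (h j : ℝ)) = ((A i ⬝ᵥ h : ℚ) : ℝ) := by
      simp [dotProduct]
    rw [this, hker ⟨i, hi⟩]
    simp [ℓ, hi]
  · exact hh i hi

section

variable {p : ℕ} {ι : Type*} [Finite ι] {A : ι → Fin p → ℚ} {b : ι → ℚ} {d : Fin p → ℝ}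

lemma latticeFree_setOf_dotProduct_eq_zero_imp
    (hLF : LatticeFree {x | ∀ i, (fun j => (A i j : ℝ)) ⬝ᵥ x ≤ b i})
    (hne : (interior {x | ∀ i, (fun j => (A i j : ℝ)) ⬝ᵥ x ≤ b i}).Nonempty)
    (hd : ∀ i, (fun j => (A i j : ℝ)) ⬝ᵥ d ≤ 0) :
    LatticeFree {x | ∀ i, (fun j => (A i j : ℝ)) ⬝ᵥ d = 0 → (fun j => (A i j : ℝ)) ⬝ᵥ x ≤ b i} := by
  -- An integer point `z` interior to the relaxed set is moved into the interior of the original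
  -- polyhedron by `k • g`, where the integer vector `g` has the sign pattern of `d`: the kept rows
  -- do not change along `g`, the dropped ones decrease without bound.
  set ℓ : ι → (Fin p → ℝ) → ℝ := fun i x => (fun j => (A i j : ℝ)) ⬝ᵥ x
  set Lx := {x | ∀ i, ℓ i x ≤ b i}
  set C := {x | ∀ i, ℓ i d = 0 → ℓ i x ≤ b i}
  have hLxC : Lx ⊆ C := fun x hx i _ => hx i
  intro z hz hz_int
  choose ζ hζ using hz_int
  have hzC := intrinsicInterior_subset_interior (hne.mono (interior_mono hLxC)) hz
  obtain ⟨ε, hε, hball⟩ := Metric.nhds_basis_closedBall.mem_iff.1 (mem_interior_iff_mem_nhds.1 hzC)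
  obtain ⟨g, hg⟩ := exists_int_sign_dotProduct_eq A d
  set g' : Fin p → ℝ := fun j => (g j : ℝ)
  have hbdd : ∀ i, BddAbove (ℓ i '' Metric.closedBall z ε) := fun i =>
    (isCompact_closedBall z ε).bddAbove_image (by fun_prop : Continuous (ℓ i)).continuousOn
  choose M hM using hbdd
  have hk : ∀ᶠ k : ℕ in atTop, ∀ i, ℓ i d < 0 → M i + k * ℓ i g' ≤ b i := by
    refine eventually_all.2 fun i => ?_
    by_cases hi : ℓ i d < 0
    · have hgi : ℓ i g' < 0 := sign_eq_neg_one_iff.1 ((hg i).trans (sign_eq_neg_one_iff.2 hi))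
      exact (tendsto_atBot_add_const_left _ _ (tendsto_natCast_atTop_atTop.atTop_mul_const_of_neg
        hgi)).eventually (eventually_le_atBot _) |>.mono fun _ h _ => h
    · exact Eventually.of_forall fun _ h => absurd h hi
  obtain ⟨k, hk⟩ := hk.exists
  have hshift : ∀ y ∈ Metric.closedBall z ε, y + (k : ℝ) • g' ∈ Lx := fun y hy i => by
    have hsplit : ℓ i (y + (k : ℝ) • g') = ℓ i y + k * ℓ i g' := by
      simp only [ℓ, dotProduct_add, dotProduct_smul, smul_eq_mul]
    rcases (hd i).eq_or_lt with h0 | hneg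
    · have : ℓ i g' = 0 := sign_eq_zero_iff.1 ((hg i).trans (sign_eq_zero_iff.2 h0))
      rw [hsplit, this, mul_zero, add_zero]
      exact hball hy i h0
    · rw [hsplit]
      linarith [hM i ⟨y, hy, rfl⟩, hk i hneg]
  have hint : z + (k : ℝ) • g' ∈ interior Lx :=
    interior_maximal (image_subset_iff.2 fun y hy => hshift y (Metric.ball_subset_closedBall hy) :
      (· + (k : ℝ) • g') '' Metric.ball z ε ⊆ Lx)
      (isOpenMap_add_right _ _ Metric.isOpen_ball) ⟨z, Metric.mem_ball_self hε, rfl⟩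
  exact hLF _ (interior_subset_intrinsicInterior hint) fun j => ⟨ζ j + k * g j, by simp [g', hζ]⟩

lemma add_smul_mem_of_dotProduct_nonpos {Lx : Set (Fin p → ℝ)}
    (hLx : Lx = {x | ∀ i, (fun j => (A i j : ℝ)) ⬝ᵥ x ≤ b i}) (hLF : LatticeFree Lx)
    (hmax : ∀ C : Set (Fin p → ℝ), Convex ℝ C → LatticeFree C → Lx ⊆ C → C = Lx)
    (hne : (interior Lx).Nonempty) (hd : ∀ i, (fun j => (A i j : ℝ)) ⬝ᵥ d ≤ 0)
    {x : Fin p → ℝ} (hx : x ∈ Lx) (t : ℝ) : x + t • d ∈ Lx := by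
  -- Dropping the rows that are strict on `d` leaves a lattice-free convex superset of `Lx`, which
  -- is invariant under translation along `d` and equals `Lx` by maximality.
  subst hLx
  set C := {x | ∀ i, (fun j => (A i j : ℝ)) ⬝ᵥ d = 0 → (fun j => (A i j : ℝ)) ⬝ᵥ x ≤ b i}
  have hCconv : Convex ℝ C := by
    simp only [C, Set.ofPred_forall]
    exact convex_iInter fun i => convex_iInter fun _ =>
      convex_halfSpace_le ⟨dotProduct_add _, fun c x => dotProduct_smul c _ x⟩ _
  have hC : C = _ :=
    hmax C hCconv (latticeFree_setOf_dotProduct_eq_zero_imp hLF hne hd) fun x hx i _ => hx i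
  rw [← hC] at hx ⊢
  intro i hi
  simpa [dotProduct_add, dotProduct_smul, hi] using hx i hi

end

lemma IsSplitPolyhedron.mem_interior_of_forall_add_smul_mem {p : ℕ} {Lx : Set (Fin p → ℝ)}
    (hL : IsSplitPolyhedron Lx) {w d : Fin p → ℝ} (h : ∀ t : ℝ, 1 ≤ t → w + t • d ∈ interior Lx) :
    w ∈ interior Lx := by
  obtain ⟨⟨m, A, b, hLx⟩, hLF, hmax⟩ := hL
  replace hLx : Lx = {x | ∀ i, (fun j => (A i j : ℝ)) ⬝ᵥ x ≤ b i} := hLx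
  have hd : ∀ i, (fun j => (A i j : ℝ)) ⬝ᵥ d ≤ 0 := fun i =>
    nonpos_of_forall_add_mul_le (c := (fun j => (A i j : ℝ)) ⬝ᵥ w) (β := b i) fun t ht => by
      have := hLx ▸ interior_subset (h t ht)
      simpa [dotProduct_add, dotProduct_smul] using this i
  have hback : (· + d) ⁻¹' Lx ⊆ Lx := fun x hx => by
    simpa using add_smul_mem_of_dotProduct_nonpos hLx hLF hmax ⟨_, h 1 le_rfl⟩ hd hx (-1)
  have h1 : w ∈ (Homeomorph.addRight d) ⁻¹' interior Lx := by simpa using h 1 le_rfl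
  rw [Homeomorph.preimage_interior] at h1
  exact interior_mono hback h1

lemma IsMISplit.mem_interior_of_forall_add_smul_mem {p n : ℕ} {hpn : p ≤ n}
    {L : Set (Fin n → ℝ)} (hL : IsMISplit hpn L) {w d : Fin n → ℝ}
    (h : ∀ t : ℝ, 1 ≤ t → w + t • d ∈ interior L) : w ∈ interior L := by
  obtain ⟨Lx, hLx, rfl⟩ := hL
  have hint : interior {z : Fin n → ℝ | (fun i => z (Fin.castLE hpn i)) ∈ Lx}
      = (· ∘ Fin.castLE hpn) ⁻¹' interior Lx :=
    interior_preimage_comp (Fin.castLE_injective hpn) Lx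
  rw [hint] at h ⊢
  exact hLx.mem_interior_of_forall_add_smul_mem h

lemma IsMISplit.add_mem_convexHull {p n : ℕ} {hpn : p ≤ n} {L : Set (Fin n → ℝ)}
    (hL : IsMISplit hpn L) {P : Set (Fin n → ℝ)} {w d : Fin n → ℝ} (hw : w ∈ P)
    (hwL : w ∉ interior L) (hray : ∀ t : ℝ, 0 ≤ t → w + t • d ∈ P) :
    w + d ∈ convexHull ℝ {x ∈ P | x ∉ interior L} := by
  by_cases hwd : w + d ∈ interior L
  · obtain ⟨t, ht, htL⟩ : ∃ t : ℝ, 1 ≤ t ∧ w + t • d ∉ interior L := by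
      by_contra! h
      exact hwL (hL.mem_interior_of_forall_add_smul_mem h)
    have ht0 : 0 < t := by linarith
    refine segment_subset_convexHull (s := {x ∈ P | x ∉ interior L}) ⟨hw, hwL⟩
      ⟨hray t ht0.le, htL⟩ ?_
    rw [segment_eq_image']
    exact ⟨t⁻¹, ⟨by positivity, inv_le_one_of_one_le₀ ht⟩, by simp [smul_smul, ht0.ne']⟩
  · exact subset_convexHull ℝ _ ⟨by simpa using hray 1 zero_le_one, hwd⟩

theorem stmt3_general {p n : ℕ} (hpn : p ≤ n) {V E : Type*} [Fintype E]
    (v : V → Fin n → ℝ) (r : E → Fin n → ℝ)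
    (P : Set (Fin n → ℝ))
    (hP : P = convexHull ℝ (Set.range v) +
      {d | ∃ μ : E → ℝ, (∀ j, 0 ≤ μ j) ∧ d = ∑ j, μ j • r j})
    (hvert : ∀ i, v i ∈ Set.extremePoints ℝ P)
    (L : Set (Fin n → ℝ)) (hL : IsMISplit hpn L) :
    convexHull ℝ {x ∈ P | x ∉ interior L} ≠ P ↔ ∃ i, v i ∈ interior L := by
  have hP' : P = convexHull ℝ (range v) + conicHull r := hP
  have hray : ∀ x ∈ P, ∀ d ∈ conicHull r, ∀ t : ℝ, 0 ≤ t → x + t • d ∈ P := by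
    rw [hP']
    exact fun x hx d hd t ht => add_smul_mem_add_conicHull hx hd ht
  constructor
  · intro hne
    by_contra! hno
    have hPconv : Convex ℝ P := hP' ▸ (convex_convexHull ℝ _).add convex_conicHull
    refine hne ((convexHull_min (sep_subset _ _) hPconv).antisymm fun x hx => ?_)
    rw [hP'] at hx
    obtain ⟨a, ha, d, hd, rfl⟩ := hx
    have hshift : convexHull ℝ (range v) ⊆ (· + d) ⁻¹' convexHull ℝ {x ∈ P | x ∉ interior L} :=
      convexHull_min (range_subset_iff.2 fun i => hL.add_mem_convexHull (hvert i).1 (hno i)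
        (hray _ (hvert i).1 d hd)) ((convex_convexHull ℝ _).translate_preimage_left d)
    exact hshift ha
  · rintro ⟨i, hi⟩ heq
    exact (extremePoints_convexHull_subset (heq ▸ hvert i)).2 hi

/-- Lemma `int_vert_nec`: `R(L,P) ≠ P` iff some vertex of `P` lies in the
interior of `L`. -/
theorem stmt3 {p n : ℕ} (hpn : p ≤ n) {V E : Type*} [Fintype V] [Fintype E]
    (v : V → Fin n → ℝ) (r : E → Fin n → ℝ)
    (hvQ : ∀ i k, ∃ q : ℚ, v i k = (q : ℝ))
    (hrZ : ∀ j k, ∃ z : ℤ, r j k = (z : ℝ))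
    (P : Set (Fin n → ℝ))
    (hP : P = convexHull ℝ (Set.range v) +
      {d | ∃ μ : E → ℝ, (∀ j, 0 ≤ μ j) ∧ d = ∑ j, μ j • r j})
    (hvert : ∀ i, v i ∈ Set.extremePoints ℝ P)
    (L : Set (Fin n → ℝ)) (hL : IsMISplit hpn L) :
    convexHull ℝ {x ∈ P | x ∉ interior L} ≠ P ↔ ∃ i, v i ∈ interior L :=
  stmt3_general hpn v r P hP hvert L hL
end

section
/- Let δ^T x ≥ δ₀ be a non-negative cut for P, let V^c = {i ∈ V : δ^T v^i < δ₀}, V^s = V \ V^c, and fix k ∈ V^s with δ^T v^k > δ₀. For any convex combination λ^c supported on V^c with v_{λ^c} = Σ_{i∈V^c} λ^c_i v^i, the point v_{λ^c} + β'(λ^c)(v^k − v_{λ^c}) where β'(λ^c) = (δ₀ − δ^T v_{λ^c})/(δ^T(v^k − v_{λ^c})) is a convex combination of the points v^i + β'_i (v^k − v^i), i ∈ V^c, where β'_i = (δ₀ − δ^T v^i)/(δ^T(v^k − v^i)). -/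
/-!
Write `c(x) = f (w - x)` and let `p(x) = x + ((δ₀ - f x) / c(x)) • (w - x)` be the point where the
segment from `x` to `w` meets the hyperplane `f = δ₀`. Clearing the denominator,
`c(x) • p(x) = (f w - δ₀) • x + (δ₀ - f x) • w`, and the right-hand side is affine in `x`. Hence for
a convex combination `x = ∑ λᵢ xᵢ` we get `c(x) • p(x) = ∑ λᵢ c(xᵢ) • p(xᵢ)` with
`c(x) = ∑ λᵢ c(xᵢ)`, i.e. `p(x)` is the centre of mass of the `p(xᵢ)` with weights `λᵢ c(xᵢ)`,
which are nonnegative as soon as every `xᵢ` lies strictly below `w`.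
-/

section Field

variable {𝕜 E : Type*} [Field 𝕜] [AddCommGroup E] [Module 𝕜 E]

def hyperplaneCrossing (f : E →ₗ[𝕜] 𝕜) (δ₀ : 𝕜) (w x : E) : E :=
  x + ((δ₀ - f x) / f (w - x)) • (w - x)

variable (f : E →ₗ[𝕜] 𝕜) (δ₀ : 𝕜) (w : E)

theorem smul_hyperplaneCrossing {x : E} (hx : f (w - x) ≠ 0) :
    f (w - x) • hyperplaneCrossing f δ₀ w x = (f w - δ₀) • x + (δ₀ - f x) • w := by
  rw [hyperplaneCrossing, smul_add, smul_smul, mul_div_cancel₀ _ hx, map_sub]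
  module

theorem sum_smul_hyperplaneCrossing_numerator {ι : Type*} (s : Finset ι) (lam : ι → 𝕜)
    (x : ι → E) (hsum : ∑ i ∈ s, lam i = 1) :
    (f w - δ₀) • ∑ i ∈ s, lam i • x i + (δ₀ - f (∑ i ∈ s, lam i • x i)) • w =
      ∑ i ∈ s, lam i • ((f w - δ₀) • x i + (δ₀ - f (x i)) • w) := by
  have hterm : ∀ i ∈ s, lam i • ((f w - δ₀) • x i + (δ₀ - f (x i)) • w) =
      (f w - δ₀) • (lam i • x i) + (δ₀ * lam i) • w - f (lam i • x i) • w := fun i _ => by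
    rw [map_smul, smul_eq_mul]
    module
  rw [Finset.sum_congr rfl hterm, Finset.sum_sub_distrib, Finset.sum_add_distrib,
    ← Finset.smul_sum, ← Finset.sum_smul, ← Finset.mul_sum, ← Finset.sum_smul, ← map_sum, hsum]
  module

theorem map_sub_sum_of_sum_eq_one {ι : Type*} (s : Finset ι) (lam : ι → 𝕜) (x : ι → E)
    (hsum : ∑ i ∈ s, lam i = 1) :
    f (w - ∑ i ∈ s, lam i • x i) = ∑ i ∈ s, lam i * f (w - x i) := by
  simp only [map_sub, map_sum, map_smul, smul_eq_mul, mul_sub, Finset.sum_sub_distrib,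
    ← Finset.sum_mul, hsum, one_mul]

theorem hyperplaneCrossing_sum_eq_centerMass {ι : Type*} (s : Finset ι) (lam : ι → 𝕜)
    (x : ι → E) (hsum : ∑ i ∈ s, lam i = 1) (hx : ∀ i ∈ s, f (w - x i) ≠ 0)
    (hc : f (w - ∑ i ∈ s, lam i • x i) ≠ 0) :
    hyperplaneCrossing f δ₀ w (∑ i ∈ s, lam i • x i) =
      s.centerMass (fun i => lam i * f (w - x i)) (fun i => hyperplaneCrossing f δ₀ w (x i)) := by
  rw [Finset.centerMass, ← map_sub_sum_of_sum_eq_one f w s lam x hsum, eq_inv_smul_iff₀ hc,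
    smul_hyperplaneCrossing f δ₀ w hc, sum_smul_hyperplaneCrossing_numerator f δ₀ w s lam x hsum]
  refine Finset.sum_congr rfl fun i hi => ?_
  rw [mul_smul, smul_hyperplaneCrossing f δ₀ w (hx i hi)]

end Field

theorem hyperplaneCrossing_sum_mem_convexHull {𝕜 E ι : Type*} [Field 𝕜] [LinearOrder 𝕜]
    [IsStrictOrderedRing 𝕜] [AddCommGroup E] [Module 𝕜 E] (f : E →ₗ[𝕜] 𝕜) (δ₀ : 𝕜) (w : E)
    (s : Finset ι) (lam : ι → 𝕜) (x : ι → E) (hlam : ∀ i ∈ s, 0 ≤ lam i)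
    (hsum : ∑ i ∈ s, lam i = 1) (hx : ∀ i ∈ s, f (x i) < f w) :
    hyperplaneCrossing f δ₀ w (∑ i ∈ s, lam i • x i) ∈
      convexHull 𝕜 ((fun i => hyperplaneCrossing f δ₀ w (x i)) '' s) := by
  have hpos : ∀ i ∈ s, 0 < f (w - x i) := fun i hi => by simpa [map_sub] using hx i hi
  have hweights : 0 < ∑ i ∈ s, lam i * f (w - x i) := by
    obtain ⟨j, hj, hlamj⟩ :=
      Finset.exists_lt_of_sum_lt (s := s) (f := 0) (g := lam) (by simp [hsum])
    exact Finset.sum_pos' (fun i hi => mul_nonneg (hlam i hi) (hpos i hi).le)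
      ⟨j, hj, mul_pos hlamj (hpos j hj)⟩
  rw [hyperplaneCrossing_sum_eq_centerMass f δ₀ w s lam x hsum (fun i hi => (hpos i hi).ne')
    (by rw [map_sub_sum_of_sum_eq_one f w s lam x hsum]; exact hweights.ne')]
  exact s.centerMass_mem_convexHull (fun i hi => mul_nonneg (hlam i hi) (hpos i hi).le) hweights
    fun i hi => Set.mem_image_of_mem _ hi

theorem stmt5_general {n : ℕ} {V : Type*} [Fintype V]
    (v : V → Fin n → ℝ)
    (δ : Fin n → ℝ) (δ0 : ℝ)
    (Vc : Set V) (hVc : Vc = {i | ∑ t, δ t * v i t < δ0})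
    (k : V) (hk : δ0 < ∑ t, δ t * v k t)
    (lam : V → ℝ) (hlam0 : ∀ i, 0 ≤ lam i)
    (hsupp : ∀ i ∉ Vc, lam i = 0) (hsum : ∑ i, lam i = 1) :
    (∑ i, lam i • v i) +
        ((δ0 - ∑ t, δ t * (∑ i, lam i • v i) t) /
            (∑ t, δ t * (v k t - (∑ i, lam i • v i) t))) •
          (v k - ∑ i, lam i • v i) ∈
      convexHull ℝ {y | ∃ i ∈ Vc,
        y = v i + ((δ0 - ∑ t, δ t * v i t) / (∑ t, δ t * (v k t - v i t))) • (v k - v i)} := by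
  classical
  let f := dotProductBilin ℝ ℝ δ
  let s := Finset.univ.filter (· ∈ Vc)
  have hmem_of_ne_zero : ∀ i, lam i ≠ 0 → i ∈ Vc := fun i h => by_contra fun hi => h (hsupp i hi)
  have hsum_s : ∑ i ∈ s, lam i = 1 := by
    rwa [Finset.sum_filter_of_ne fun i _ => hmem_of_ne_zero i]
  have hcomb : ∑ i, lam i • v i = ∑ i ∈ s, lam i • v i :=
    (Finset.sum_filter_of_ne fun i _ h => hmem_of_ne_zero i (left_ne_zero_of_smul h)).symm
  have hbelow : ∀ i ∈ s, f (v i) < f (v k) := fun i hi => by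
    have hi : i ∈ Vc := (Finset.mem_filter.1 hi).2
    rw [hVc] at hi
    exact hi.trans hk
  change hyperplaneCrossing f δ0 (v k) (∑ i, lam i • v i) ∈
    convexHull ℝ {y | ∃ i ∈ Vc, y = hyperplaneCrossing f δ0 (v k) (v i)}
  rw [hcomb]
  refine convexHull_mono ?_ (hyperplaneCrossing_sum_mem_convexHull f δ0 (v k) s lam v
    (fun i _ => hlam0 i) hsum_s hbelow)
  rintro _ ⟨i, hi, rfl⟩
  exact ⟨i, (Finset.mem_filter.1 hi).2, rfl⟩

/-- Lemma `beta_prime_properties`: the intersection point obtained from a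
convex combination `λ^c` supported on the cut-off vertices is a convex
combination of the intersection points obtained from the cut-off vertices
themselves. -/
theorem stmt5 {n : ℕ} {V E : Type*} [Fintype V] [Fintype E]
    (v : V → Fin n → ℝ) (r : E → Fin n → ℝ)
    (δ : Fin n → ℝ) (δ0 : ℝ)
    (hnn : ∀ j, 0 ≤ ∑ t, δ t * r j t)
    (Vc : Set V) (hVc : Vc = {i | ∑ t, δ t * v i t < δ0})
    (k : V) (hk : δ0 < ∑ t, δ t * v k t)
    (lam : V → ℝ) (hlam0 : ∀ i, 0 ≤ lam i)
    (hsupp : ∀ i ∉ Vc, lam i = 0) (hsum : ∑ i, lam i = 1) :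
    (∑ i, lam i • v i) +
        ((δ0 - ∑ t, δ t * (∑ i, lam i • v i) t) /
            (∑ t, δ t * (v k t - (∑ i, lam i • v i) t))) •
          (v k - ∑ i, lam i • v i) ∈
      convexHull ℝ {y | ∃ i ∈ Vc,
        y = v i + ((δ0 - ∑ t, δ t * v i t) / (∑ t, δ t * (v k t - v i t))) • (v k - v i)} :=
  stmt5_general v δ δ0 Vc hVc k hk lam hlam0 hsupp hsum
end

section
/- Let δ^T x ≥ δ₀ be a non-negative cut for P. Every vertex of Q = {x ∈ P : δ^T x ≥ δ₀} is of one of three forms: (i) a vertex v^k of P with δ^T v^k ≥ δ₀; (ii) an intersection point v^i + β'_{i,k}(v^k − v^i) on the hyperplane δ^T x = δ₀, where δ^T v^i < δ₀ and δ^T v^k ≥ δ₀; (iii) an intersection point v^i + α'_{i,j} r^j on the hyperplane δ^T x = δ₀, where δ^T v^i < δ₀ and j ∈ E with δ^T r^j > 0. -/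
/-!
Write the points of `P` as `∑ κ_s w_s`, where `s` runs over the vertices and the rays, `κ ≥ 0`
and `χ ⬝ κ = 1` for the indicator `χ` of the vertices. For an extreme point `x` of `Q`, choose such
a representation of minimal support. If `d` is supported on the support of `κ`, keeps `χ ⬝ d = 0`
and, when the cut is tight at `x`, also `δᵀ (∑ d_s w_s) = 0`, then `x ± t ∑ d_s w_s ∈ Q` for small
`t`; extremality gives `∑ d_s w_s = 0`, and minimality of the support then gives `d = 0`. Hence the
pairs `(χ_s, δᵀ w_s)` over the support are linearly independent in `ℝ²` (and the `χ_s` alone are,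
if the cut is slack). So the support is a single vertex, giving (i), or, the cut being tight,
two vertices or a vertex and a ray, giving (ii) and (iii).
-/

open Pointwise Filter Topology

theorem eq_zero_of_mem_extremePoints_of_eventually_add_smul_mem {M : Type*} [AddCommGroup M]
    [Module ℝ M] {Q : Set M} {x u : M} (hx : x ∈ Set.extremePoints ℝ Q)
    (h : ∀ᶠ t in 𝓝 (0 : ℝ), x + t • u ∈ Q) : u = 0 := by
  have hneg : ∀ᶠ t in 𝓝 (0 : ℝ), x + (-t) • u ∈ Q :=
    (continuous_neg.tendsto' 0 0 neg_zero).eventually h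
  obtain ⟨t, ⟨hpos, hneg⟩, ht⟩ :=
    (((h.and hneg).filter_mono nhdsWithin_le_nhds).and
      (self_mem_nhdsWithin : {0}ᶜ ∈ 𝓝[≠] (0 : ℝ))).exists
  have hseg : x ∈ openSegment ℝ (x + t • u) (x + (-t) • u) :=
    ⟨1 / 2, 1 / 2, by norm_num, by norm_num, by norm_num, by module⟩
  have := hx.2 hpos hneg hseg
  rw [add_eq_left, smul_eq_zero] at this
  exact this.resolve_left ht

section Support

variable {ι : Type*} [Fintype ι]

theorem exists_nonneg_add_smul_support_ssubset {κ d : ι → ℝ} (hκ : 0 ≤ κ)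
    (hd : ∀ s, κ s = 0 → d s = 0) {s₀ : ι} (hs₀ : d s₀ < 0) :
    ∃ t : ℝ, 0 ≤ κ + t • d ∧
      Finset.univ.filter (fun s => (κ + t • d) s ≠ 0) ⊂ Finset.univ.filter (fun s => κ s ≠ 0) := by
  classical
  obtain ⟨s₁, hs₁, hmin⟩ := Finset.exists_min_image (Finset.univ.filter fun s => d s < 0)
    (fun s => κ s / -d s) ⟨s₀, by simpa using hs₀⟩
  simp only [Finset.mem_filter, Finset.mem_univ, true_and] at hs₁ hmin
  have hκs₁ : 0 < κ s₁ := (hκ s₁).lt_of_ne fun h => hs₁.ne (hd s₁ h.symm)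
  set t := κ s₁ / -d s₁
  have ht : 0 ≤ t := div_nonneg hκs₁.le (by linarith)
  refine ⟨t, fun s => ?_, Finset.ssubset_iff_of_subset (fun s => ?_) |>.2 ⟨s₁, ?_⟩⟩
  · simp only [Pi.add_apply, Pi.smul_apply, smul_eq_mul, Pi.zero_apply]
    rcases lt_or_ge (d s) 0 with h | h
    · nlinarith [(le_div_iff₀ (neg_pos.2 h)).1 (hmin s h)]
    · exact add_nonneg (hκ s) (mul_nonneg ht h)
  · simp only [Finset.mem_filter, Finset.mem_univ, true_and, Pi.add_apply, Pi.smul_apply,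
      smul_eq_mul]
    exact mt fun h => by simp [h, hd s h]
  · simp only [Finset.mem_filter, Finset.mem_univ, true_and, Pi.add_apply, Pi.smul_apply,
      smul_eq_mul, not_not, t]
    refine ⟨hκs₁.ne', ?_⟩
    rw [div_neg, neg_mul, div_mul_cancel₀ _ hs₁.ne, add_neg_cancel]

/-- Conic Carathéodory: a nonnegative representation of minimal support. -/
theorem exists_nonneg_eq_forall_support_ker_eq_zero {N : Type*} [AddCommGroup N] [Module ℝ N]
    (F : (ι → ℝ) →ₗ[ℝ] N) {κ₀ : ι → ℝ} (hκ₀ : 0 ≤ κ₀) :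
    ∃ κ, 0 ≤ κ ∧ F κ = F κ₀ ∧ ∀ d, (∀ s, κ s = 0 → d s = 0) → F d = 0 → d = 0 := by
  classical
  obtain ⟨κ, ⟨hκ, hFκ⟩, hmin⟩ :=
    (InvImage.wf (fun κ : ι → ℝ => (Finset.univ.filter fun s => κ s ≠ 0).card)
      wellFounded_lt).has_min {κ | 0 ≤ κ ∧ F κ = F κ₀} ⟨κ₀, hκ₀, rfl⟩
  have hnonneg : ∀ d, (∀ s, κ s = 0 → d s = 0) → F d = 0 → 0 ≤ d := by
    intro d hd hFd s₀
    by_contra! hs₀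
    obtain ⟨t, ht, hss⟩ := exists_nonneg_add_smul_support_ssubset hκ hd hs₀
    exact hmin _ ⟨ht, by simp [hFd, hFκ]⟩ (Finset.card_lt_card hss)
  refine ⟨κ, hκ, hFκ, fun d hd hFd => le_antisymm ?_ (hnonneg d hd hFd)⟩
  simpa using hnonneg (-d) (fun s hs => by simp [hd s hs]) (by simp [hFd])

theorem eventually_nonneg_add_smul {κ d : ι → ℝ} (hκ : 0 ≤ κ) (hd : ∀ s, κ s = 0 → d s = 0) :
    ∀ᶠ t in 𝓝 (0 : ℝ), 0 ≤ κ + t • d := by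
  simp only [Pi.le_def, eventually_all]
  intro s
  rcases (hκ s).eq_or_lt with h | h
  · exact Eventually.of_forall fun t => by simp [← h, hd s h.symm]
  · have : Tendsto (fun t : ℝ => κ s + t * d s) (𝓝 0) (𝓝 (κ s)) := by
      simpa using ((tendsto_id (x := 𝓝 (0 : ℝ))).mul_const (d s)).const_add (κ s)
    exact (this.eventually_const_lt h).mono fun t ht => by simpa using ht.le

theorem linearIndepOn_support_of_forall {R N : Type*} [Ring R] [AddCommGroup N] [Module R N]
    {κ : ι → R} {u : ι → N}
    (h : ∀ d : ι → R, (∀ s, κ s = 0 → d s = 0) → ∑ s, d s • u s = 0 → d = 0) :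
    LinearIndepOn R u (Function.support κ) := by
  classical
  rw [linearIndepOn_iff'']
  intro t g ht hg hsum s hs
  refine congr_fun (h g (fun s hs => hg s fun hst => ht hst hs) ?_) s
  rwa [← Finset.sum_subset (Finset.subset_univ t) fun s _ hs => by simp [hg s hs]]

end Support

theorem LinearIndepOn.eq_of_ne_of_ne {ι : Type*} {u : ι → ℝ × ℝ} {S : Set ι}
    (h : LinearIndepOn ℝ u S) {i a b : ι} (hi : i ∈ S) (ha : a ∈ S) (hb : b ∈ S) (hai : a ≠ i) (hbi : b ≠ i) : a = b := by
  have h2 : S.encard ≤ 2 := by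
    simpa [rank_prod', one_add_one_eq_two] using h.encard_le_toENat_rank
  have h1 : (S \ {i}).encard ≤ 1 := by
    rw [← Set.encard_sdiff_singleton_add_one hi, ← one_add_one_eq_two] at h2
    exact (ENat.add_le_add_iff_right ENat.one_ne_top).1 h2
  exact Set.encard_le_one_iff.1 h1 a b ⟨ha, hai⟩ ⟨hb, hbi⟩

section Extreme

variable {ι M : Type*} [Fintype ι] [AddCommGroup M] [Module ℝ M]

theorem exists_coeffs_linearIndepOn_of_mem_extremePoints {w : ι → M} {χ : ι → ℝ}
    {f : M →ₗ[ℝ] ℝ} {δ₀ : ℝ} {x : M}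
    (hx : x ∈ Set.extremePoints ℝ
      {y ∈ Fintype.linearCombination ℝ w '' {κ | 0 ≤ κ ∧ χ ⬝ᵥ κ = 1} | δ₀ ≤ f y}) :
    ∃ κ : ι → ℝ, 0 ≤ κ ∧ χ ⬝ᵥ κ = 1 ∧ Fintype.linearCombination ℝ w κ = x ∧
      LinearIndepOn ℝ (fun s => (χ s, f (w s))) (Function.support κ) ∧
      (δ₀ < f x → LinearIndepOn ℝ χ (Function.support κ)) := by
  set g := Fintype.linearCombination ℝ w
  obtain ⟨⟨κ₀, ⟨hκ₀, hχκ₀⟩, rfl⟩, hcut⟩ := hx.1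
  obtain ⟨κ, hκ, hFκ, hker⟩ :=
    exists_nonneg_eq_forall_support_ker_eq_zero (g.prod (dotProductBilin ℝ ℝ χ)) hκ₀
  obtain ⟨hgκ, hχκ⟩ : g κ = g κ₀ ∧ χ ⬝ᵥ κ = χ ⬝ᵥ κ₀ := Prod.ext_iff.1 hFκ
  have hrigid : ∀ d, (∀ s, κ s = 0 → d s = 0) → χ ⬝ᵥ d = 0 →
      (f (g d) = 0 ∨ δ₀ < f (g κ₀)) → d = 0 := by
    intro d hd hχd hd_cut
    have hcut' : ∀ᶠ t in 𝓝 (0 : ℝ), δ₀ ≤ f (g κ₀) + t * f (g d) := by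
      rcases hd_cut with h | h
      · exact Eventually.of_forall fun t => by simpa [h] using hcut
      · refine ((Tendsto.eventually_const_lt h ?_).mono fun _ => le_of_lt)
        simpa using ((tendsto_id (x := 𝓝 (0 : ℝ))).mul_const (f (g d))).const_add (f (g κ₀))
    have hgd : g d = 0 := by
      refine eq_zero_of_mem_extremePoints_of_eventually_add_smul_mem hx ?_
      filter_upwards [eventually_nonneg_add_smul hκ hd, hcut'] with t hnn hft
      refine ⟨⟨κ + t • d, ⟨hnn, ?_⟩, by simp [hgκ]⟩, by simpa using hft⟩
      simp [dotProduct_add, hχκ, hχκ₀, hχd]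
    exact hker d hd (by simp [hgd, hχd])
  refine ⟨κ, hκ, hχκ.trans hχκ₀, hgκ, linearIndepOn_support_of_forall fun d hd hsum => ?_,
    fun h => linearIndepOn_support_of_forall fun d hd hsum => ?_⟩
  · have hχd : χ ⬝ᵥ d = 0 := by
      simpa [dotProduct, mul_comm, Prod.fst_sum] using congr_arg Prod.fst hsum
    have hfd : f (g d) = 0 := by
      simpa [g, Fintype.linearCombination_apply, Prod.snd_sum] using congr_arg Prod.snd hsum
    exact hrigid d hd hχd (Or.inl hfd)
  · exact hrigid d hd (by simpa [dotProduct, mul_comm] using hsum) (Or.inr h)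

end Extreme

section Polyhedron

variable {V E M : Type*} [Fintype V] [Fintype E] [AddCommGroup M] [Module ℝ M]

theorem convexHull_range_eq_image_stdSimplex (v : V → M) :
    convexHull ℝ (Set.range v) = Fintype.linearCombination ℝ v '' stdSimplex ℝ V := by
  classical
  rw [← convexHull_rangle_single_eq_stdSimplex, LinearMap.image_convexHull, ← Set.range_comp]
  congr
  ext i
  simp

theorem convexHull_add_cone_eq_image (v : V → M) (r : E → M) :
    convexHull ℝ (Set.range v) + {d | ∃ μ : E → ℝ, (∀ j, 0 ≤ μ j) ∧ d = ∑ j, μ j • r j} =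
      Fintype.linearCombination ℝ (Sum.elim v r) ''
        {κ | 0 ≤ κ ∧ Sum.elim 1 0 ⬝ᵥ κ = 1} := by
  rw [convexHull_range_eq_image_stdSimplex]
  ext x
  constructor
  · rintro ⟨_, ⟨ν, ⟨hν0, hν1⟩, rfl⟩, _, ⟨μ, hμ, rfl⟩, rfl⟩
    refine ⟨Sum.elim ν μ, ⟨fun s => ?_, ?_⟩, ?_⟩
    · cases s <;> simp [hν0, hμ]
    · simpa [dotProduct, Fintype.sum_sum_type] using hν1
    · simp [Fintype.linearCombination_apply, Fintype.sum_sum_type]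
  · rintro ⟨κ, ⟨hκ0, hκ1⟩, rfl⟩
    refine ⟨_, ⟨κ ∘ Sum.inl, ⟨fun i => hκ0 _, ?_⟩, rfl⟩, _, ⟨κ ∘ Sum.inr, fun j => hκ0 _, rfl⟩, ?_⟩
    · simpa [dotProduct, Fintype.sum_sum_type] using hκ1
    · simp [Fintype.linearCombination_apply, Fintype.sum_sum_type]

end Polyhedron

section Hyperplane

variable {M : Type*} [AddCommGroup M] [Module ℝ M] (f : M →ₗ[ℝ] ℝ) {δ₀ c : ℝ} {p q : M}

theorem apply_lt_and_eq_add_div_smul (hc : 0 < c) (hq : 0 < f q) (h : f (p + c • q) = δ₀) :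
    f p < δ₀ ∧ p + c • q = p + ((δ₀ - f p) / f q) • q := by
  rw [map_add, map_smul, smul_eq_mul] at h
  refine ⟨by nlinarith, ?_⟩
  rw [← h, add_sub_cancel_left, mul_div_cancel_right₀ _ hq.ne']

theorem exists_edge_point {V : Type*} (v : V → M) {i₁ i₂ : V} {a b : ℝ} (ha : 0 < a)
    (hb : 0 < b) (hab : a + b = 1) (hne : f (v i₁) ≠ f (v i₂)) (h : f (a • v i₁ + b • v i₂) = δ₀) :
    ∃ i k, f (v i) < δ₀ ∧ δ₀ ≤ f (v k) ∧
      a • v i₁ + b • v i₂ = v i + ((δ₀ - f (v i)) / f (v k - v i)) • (v k - v i) := by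
  wlog hlt : f (v i₁) < f (v i₂) generalizing i₁ i₂ a b
  · rw [add_comm] at h ⊢
    exact this hb ha (by linarith) hne.symm h (hne.lt_or_gt.resolve_left hlt)
  have hx : a • v i₁ + b • v i₂ = v i₁ + b • (v i₂ - v i₁) := by
    rw [eq_sub_of_add_eq hab]; module
  rw [hx] at h ⊢
  have hpos : 0 < f (v i₂ - v i₁) := by simpa [map_sub] using hlt
  obtain ⟨hlt₀, heq⟩ := apply_lt_and_eq_add_div_smul f hb hpos h
  refine ⟨i₁, i₂, hlt₀, ?_, heq⟩
  rw [map_add, map_smul, smul_eq_mul, map_sub] at h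
  nlinarith

end Hyperplane

theorem eq_vertex_or_edge_point_or_ray_point {V E M : Type*} [Fintype V] [Fintype E]
    [AddCommGroup M] [Module ℝ M] {v : V → M} {r : E → M} {f : M →ₗ[ℝ] ℝ} {δ₀ : ℝ}
    (hr : ∀ j, 0 ≤ f (r j)) {κ : V ⊕ E → ℝ} {x : M} (hκ : 0 ≤ κ) (hχκ : Sum.elim 1 0 ⬝ᵥ κ = 1)
    (hx : Fintype.linearCombination ℝ (Sum.elim v r) κ = x) (hcut : δ₀ ≤ f x)
    (hindep : LinearIndepOn ℝ (fun s => (Sum.elim (1 : V → ℝ) 0 s, f (Sum.elim v r s)))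
      (Function.support κ))
    (hindep_of_lt : δ₀ < f x → LinearIndepOn ℝ (Sum.elim (1 : V → ℝ) 0) (Function.support κ)) :
    (∃ k, δ₀ ≤ f (v k) ∧ x = v k) ∨
      (∃ i k, f (v i) < δ₀ ∧ δ₀ ≤ f (v k) ∧
        x = v i + ((δ₀ - f (v i)) / f (v k - v i)) • (v k - v i)) ∨
      (∃ i j, f (v i) < δ₀ ∧ 0 < f (r j) ∧ x = v i + ((δ₀ - f (v i)) / f (r j)) • r j) := by
  rw [Fintype.linearCombination_apply] at hx
  replace hχκ : ∑ s, κ s * Sum.elim (1 : V → ℝ) 0 s = 1 := by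
    simpa [dotProduct, mul_comm] using hχκ
  obtain ⟨i, hi⟩ : ∃ i, κ (.inl i) ≠ 0 := by
    by_contra! h
    simp [Fintype.sum_sum_type, h] at hχκ
  by_cases hsingle : ∀ s, s ≠ .inl i → κ s = 0
  · have hκi : κ (.inl i) = 1 := by
      rwa [Fintype.sum_eq_single (.inl i) fun s hs => by simp [hsingle s hs], Sum.elim_inl,
        Pi.one_apply, mul_one] at hχκ
    have hxi : x = v i := by
      rw [← hx, Fintype.sum_eq_single (.inl i) fun s hs => by simp [hsingle s hs]]
      simp [hκi]
    exact Or.inl ⟨i, hxi ▸ hcut, hxi⟩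
  push Not at hsingle
  obtain ⟨s, hsi, hs⟩ := hsingle
  have hzero : ∀ s', s' ≠ .inl i ∧ s' ≠ s → κ s' = 0 := fun s' ⟨h₁, h₂⟩ => by
    by_contra h
    exact h₂ (hindep.eq_of_ne_of_ne hi h hs h₁ hsi)
  rw [Fintype.sum_eq_add _ _ hsi.symm fun s' hs' => by simp [hzero s' hs']] at hx hχκ
  have htight : f x = δ₀ := by
    refine (hcut.eq_or_lt.resolve_right fun hlt => ?_).symm
    rcases s with k | j
    · exact hsi ((hindep_of_lt hlt).injOn hs hi (by simp))
    · exact (hindep_of_lt hlt).ne_zero hs (by simp)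
  have hκi : 0 < κ (.inl i) := (hκ _).lt_of_ne' hi
  have hκs : 0 < κ s := (hκ _).lt_of_ne' hs
  subst hx
  rcases s with k | j
  · refine Or.inr (Or.inl (exists_edge_point f v hκi hκs (by simpa using hχκ) (fun h => ?_)
      htight))
    exact hsi (hindep.injOn hs hi (by simp [h]))
  · have hfr : 0 < f (r j) := (hr j).lt_of_ne' fun h => hindep.ne_zero hs (by simp [h])
    simp only [Sum.elim_inl, Sum.elim_inr, Pi.one_apply, Pi.zero_apply, mul_one, mul_zero,
      add_zero] at hχκ htight ⊢
    rw [hχκ, one_smul] at htight ⊢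
    obtain ⟨hlt, heq⟩ := apply_lt_and_eq_add_div_smul f hκs hfr htight
    exact Or.inr (Or.inr ⟨i, j, hlt, hfr, heq⟩)

theorem stmt6_general {n : ℕ} {V E : Type*} [Fintype V] [Fintype E]
    (v : V → Fin n → ℝ) (r : E → Fin n → ℝ)
    (P : Set (Fin n → ℝ))
    (hP : P = convexHull ℝ (Set.range v) +
      {d | ∃ μ : E → ℝ, (∀ j, 0 ≤ μ j) ∧ d = ∑ j, μ j • r j})
    (δ : Fin n → ℝ) (δ0 : ℝ)
    (hnn : ∀ j, 0 ≤ ∑ t, δ t * r j t)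
    (Q : Set (Fin n → ℝ)) (hQ : Q = {x ∈ P | δ0 ≤ ∑ t, δ t * x t}) :
    ∀ x ∈ Set.extremePoints ℝ Q,
      (∃ k, δ0 ≤ ∑ t, δ t * v k t ∧ x = v k) ∨
      (∃ i k, (∑ t, δ t * v i t < δ0) ∧ δ0 ≤ ∑ t, δ t * v k t ∧
        x = v i + ((δ0 - ∑ t, δ t * v i t) / (∑ t, δ t * (v k t - v i t))) • (v k - v i)) ∨
      (∃ i j, (∑ t, δ t * v i t < δ0) ∧ 0 < ∑ t, δ t * r j t ∧
        x = v i + ((δ0 - ∑ t, δ t * v i t) / (∑ t, δ t * r j t)) • r j) := by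
  intro x hx
  rw [hQ, hP, convexHull_add_cone_eq_image] at hx
  obtain ⟨κ, hκ, hχκ, hκx, hindep, hindep_of_lt⟩ :=
    exists_coeffs_linearIndepOn_of_mem_extremePoints (f := dotProductBilin ℝ ℝ δ) hx
  exact eq_vertex_or_edge_point_or_ray_point hnn hκ hχκ hκx hx.1.2 hindep hindep_of_lt

/-- Lemma `vert_prime_char`: every vertex of `{x ∈ P : δ^T x ≥ δ₀}` is a
satisfied vertex of `P` or an intersection point associated with a cut-off
vertex of `P`. -/
theorem stmt6 {n : ℕ} {V E : Type*} [Fintype V] [Fintype E]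
    (v : V → Fin n → ℝ) (r : E → Fin n → ℝ)
    (P : Set (Fin n → ℝ))
    (hP : P = convexHull ℝ (Set.range v) +
      {d | ∃ μ : E → ℝ, (∀ j, 0 ≤ μ j) ∧ d = ∑ j, μ j • r j})
    (δ : Fin n → ℝ) (δ0 : ℝ)
    (hnn : ∀ j, 0 ≤ ∑ t, δ t * r j t)
    (hcut : ∃ i, ∑ t, δ t * v i t < δ0)
    (Q : Set (Fin n → ℝ)) (hQ : Q = {x ∈ P | δ0 ≤ ∑ t, δ t * x t}) :
    ∀ x ∈ Set.extremePoints ℝ Q,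
      (∃ k, δ0 ≤ ∑ t, δ t * v k t ∧ x = v k) ∨
      (∃ i k, (∑ t, δ t * v i t < δ0) ∧ δ0 ≤ ∑ t, δ t * v k t ∧
        x = v i + ((δ0 - ∑ t, δ t * v i t) / (∑ t, δ t * (v k t - v i t))) • (v k - v i)) ∨
      (∃ i j, (∑ t, δ t * v i t < δ0) ∧ 0 < ∑ t, δ t * r j t ∧
        x = v i + ((δ0 - ∑ t, δ t * v i t) / (∑ t, δ t * r j t)) • r j) :=
  stmt6_general v r P hP δ δ0 hnn Q hQ
end

section
/- Let (δ¹)^T x ≥ δ¹₀ and (δ²)^T x ≥ δ²₀ be non-negative cuts for P cutting off the same vertex set V^c. Then {x ∈ P : (δ¹)^T x ≥ δ¹₀} ⊆ {x ∈ P : (δ²)^T x ≥ δ²₀} if and only if (i) 1/α'_{i,j}(δ¹,δ¹₀) ≤ 1/α'_{i,j}(δ²,δ²₀) for all i ∈ V^c and j ∈ E, and (ii) 1/β'_{i,k}(δ¹,δ¹₀) ≤ 1/β'_{i,k}(δ²,δ²₀) for all i ∈ V^c and k ∈ V \ V^c. -/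
/-!
If `P ∩ {δ¹ᵀx ≥ δ¹₀} ⊆ {δ²ᵀx ≥ δ²₀}`, the point where a halfline from a cut-off vertex `vⁱ`
(along a ray `rʲ`, or towards a vertex `vᵏ` that is not cut off) meets the hyperplane
`δ¹ᵀx = δ¹₀` lies in `P` and so satisfies the second cut: this is the comparison of the
intersection values. Conversely, let `ρ ≥ 0` be the largest ratio `(δ²₀ - δ²ᵀvⁱ) / (δ¹₀ - δ¹ᵀvⁱ)`
over `i ∈ V^c`. Maximality and the conditions at the maximizing vertex make
`δ²ᵀx - δ²₀ - ρ (δ¹ᵀx - δ¹₀)` nonnegative at every vertex and nondecreasing along every ray,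
hence nonnegative on `P`, so the first cut implies the second.
-/

open Pointwise Set

section Polyhedron

variable {M V E : Type*} [AddCommGroup M] [Module ℝ M] [Fintype E]

def rayCone (r : E → M) : Set M :=
  {d | ∃ μ : E → ℝ, (∀ j, 0 ≤ μ j) ∧ d = ∑ j, μ j • r j}

lemma zero_mem_rayCone (r : E → M) : (0 : M) ∈ rayCone r :=
  ⟨0, fun _ => le_rfl, by simp⟩

lemma smul_mem_rayCone (r : E → M) (j : E) {t : ℝ} (ht : 0 ≤ t) : t • r j ∈ rayCone r := by
  classical
  refine ⟨Pi.single j t, fun k => ?_, by simp [Pi.single_apply, ite_smul]⟩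
  by_cases hk : k = j <;> simp [hk, ht]

lemma add_smul_mem_convexHull_add_rayCone (v : V → M) (r : E → M) (i : V) (j : E) {t : ℝ}
    (ht : 0 ≤ t) : v i + t • r j ∈ convexHull ℝ (range v) + rayCone r :=
  add_mem_add (subset_convexHull ℝ _ ⟨i, rfl⟩) (smul_mem_rayCone r j ht)

lemma add_smul_sub_mem_convexHull_add_rayCone (v : V → M) (r : E → M) (i k : V) {t : ℝ}
    (ht : t ∈ Icc (0 : ℝ) 1) : v i + t • (v k - v i) ∈ convexHull ℝ (range v) + rayCone r := by
  have hseg : v i + t • (v k - v i) ∈ convexHull ℝ (range v) :=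
    (convex_convexHull ℝ _).add_smul_sub_mem (subset_convexHull ℝ _ (mem_range_self i))
      (subset_convexHull ℝ _ (mem_range_self k)) ht
  simpa using add_mem_add hseg (zero_mem_rayCone r)

lemma le_of_mem_convexHull_add_rayCone (v : V → M) (r : E → M) (g : M →ₗ[ℝ] ℝ) {c : ℝ}
    (hv : ∀ i, c ≤ g (v i)) (hr : ∀ j, 0 ≤ g (r j)) {x : M}
    (hx : x ∈ convexHull ℝ (range v) + rayCone r) : c ≤ g x := by
  obtain ⟨y, hy, d, ⟨μ, hμ, rfl⟩, rfl⟩ := hx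
  have hy : c ≤ g y :=
    convexHull_min (range_subset_iff.2 hv : range v ⊆ {z | c ≤ g z})
      (convex_halfSpace_ge g.isLinear c) hy
  have hd : 0 ≤ g (∑ j, μ j • r j) := by
    simpa only [map_sum, map_smul, smul_eq_mul] using
      Finset.sum_nonneg fun j _ => mul_nonneg (hμ j) (hr j)
  rw [map_add]
  linarith

end Polyhedron

lemma mul_le_of_div_le_div {a₁ a₂ b₁ b₂ : ℝ} (ha₁ : 0 < a₁) (ha₂ : 0 < a₂)
    (h : b₁ / a₁ ≤ b₂ / a₂) : a₂ / a₁ * b₁ ≤ b₂ := by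
  rw [div_le_div_iff₀ ha₁ ha₂] at h
  rw [div_mul_eq_mul_div, div_le_iff₀ ha₁]
  linarith

section Cuts

variable {M V E : Type*} [AddCommGroup M] [Module ℝ M] (φ ψ : M →ₗ[ℝ] ℝ) (φ₀ ψ₀ : ℝ)

/-- Witness: `p + ((φ₀ - φ p) / φ w) • w` lies on the hyperplane `φ = φ₀`. -/
lemma div_le_div_of_cut_subset {P : Set M}
    (hsub : {x ∈ P | φ₀ ≤ φ x} ⊆ {x ∈ P | ψ₀ ≤ ψ x}) {p w : M} (hp₁ : φ p < φ₀)
    (hp₂ : ψ p < ψ₀) (hw : 0 < φ w) (hmem : p + ((φ₀ - φ p) / φ w) • w ∈ P) :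
    φ w / (φ₀ - φ p) ≤ ψ w / (ψ₀ - ψ p) := by
  have hφ : φ (p + ((φ₀ - φ p) / φ w) • w) = φ₀ := by
    rw [map_add, map_smul, smul_eq_mul, div_mul_cancel₀ _ hw.ne']
    ring
  have hψ := (hsub ⟨hmem, hφ.ge⟩).2
  rw [map_add, map_smul, smul_eq_mul, div_mul_eq_mul_div, ← sub_le_iff_le_add',
    le_div_iff₀ hw] at hψ
  rw [div_le_div_iff₀ (sub_pos.2 hp₁) (sub_pos.2 hp₂)]
  linarith

variable (v : V → M) (r : E → M)

lemma ray_ratio_le_of_cut_subset [Fintype E] (hnn : ∀ j, 0 ≤ ψ (r j))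
    (hsub : {x ∈ convexHull ℝ (range v) + rayCone r | φ₀ ≤ φ x} ⊆
      {x ∈ convexHull ℝ (range v) + rayCone r | ψ₀ ≤ ψ x})
    {i : V} (hi₁ : φ (v i) < φ₀) (hi₂ : ψ (v i) < ψ₀) (j : E) :
    φ (r j) / (φ₀ - φ (v i)) ≤ ψ (r j) / (ψ₀ - ψ (v i)) := by
  rcases le_or_gt (φ (r j)) 0 with hj | hj
  · exact (div_nonpos_of_nonpos_of_nonneg hj (sub_pos.2 hi₁).le).trans
      (div_nonneg (hnn j) (sub_pos.2 hi₂).le)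
  · exact div_le_div_of_cut_subset φ ψ φ₀ ψ₀ hsub hi₁ hi₂ hj
      (add_smul_mem_convexHull_add_rayCone v r i j (div_pos (sub_pos.2 hi₁) hj).le)

lemma edge_ratio_le_of_cut_subset [Fintype E]
    (hsub : {x ∈ convexHull ℝ (range v) + rayCone r | φ₀ ≤ φ x} ⊆
      {x ∈ convexHull ℝ (range v) + rayCone r | ψ₀ ≤ ψ x})
    {i k : V} (hi₁ : φ (v i) < φ₀) (hi₂ : ψ (v i) < ψ₀) (hk : φ₀ ≤ φ (v k)) :
    φ (v k - v i) / (φ₀ - φ (v i)) ≤ ψ (v k - v i) / (ψ₀ - ψ (v i)) := by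
  have hki : φ₀ - φ (v i) ≤ φ (v k - v i) := by rw [map_sub]; linarith
  have hpos : 0 < φ (v k - v i) := (sub_pos.2 hi₁).trans_le hki
  refine div_le_div_of_cut_subset φ ψ φ₀ ψ₀ hsub hi₁ hi₂ hpos
    (add_smul_sub_mem_convexHull_add_rayCone v r i k ⟨?_, ?_⟩)
  · exact div_nonneg (sub_pos.2 hi₁).le hpos.le
  · exact (div_le_one hpos).2 hki

/-- `ρ` is the largest ratio `(ψ₀ - ψ (v i)) / (φ₀ - φ (v i))` over `i ∈ Vc`, and `0` if
`Vc = ∅`. -/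
lemma exists_cut_multiplier [Finite V] (hnn : ∀ j, 0 ≤ ψ (r j)) (Vc : Set V)
    (hVc₁ : ∀ i, i ∈ Vc ↔ φ (v i) < φ₀) (hVc₂ : ∀ i, i ∈ Vc ↔ ψ (v i) < ψ₀)
    (hray : ∀ i ∈ Vc, ∀ j, φ (r j) / (φ₀ - φ (v i)) ≤ ψ (r j) / (ψ₀ - ψ (v i)))
    (hedge : ∀ i ∈ Vc, ∀ k ∉ Vc,
      φ (v k - v i) / (φ₀ - φ (v i)) ≤ ψ (v k - v i) / (ψ₀ - ψ (v i))) :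
    ∃ ρ : ℝ, 0 ≤ ρ ∧ (∀ i, ψ₀ - ρ * φ₀ ≤ (ψ - ρ • φ) (v i)) ∧ ∀ j, 0 ≤ (ψ - ρ • φ) (r j) := by
  simp only [LinearMap.sub_apply, LinearMap.smul_apply, smul_eq_mul, sub_nonneg]
  rcases Vc.eq_empty_or_nonempty with hempty | hne
  · refine ⟨0, le_rfl, fun i => ?_, by simpa using hnn⟩
    have := (hVc₂ i).not.1 (hempty ▸ notMem_empty i)
    linarith
  obtain ⟨i₀, hi₀, hmax⟩ :=
    Vc.exists_max_image (fun i => (ψ₀ - ψ (v i)) / (φ₀ - φ (v i))) Vc.toFinite hne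
  have ha₁ : 0 < φ₀ - φ (v i₀) := sub_pos.2 ((hVc₁ i₀).1 hi₀)
  have ha₂ : 0 < ψ₀ - ψ (v i₀) := sub_pos.2 ((hVc₂ i₀).1 hi₀)
  set ρ := (ψ₀ - ψ (v i₀)) / (φ₀ - φ (v i₀))
  refine ⟨ρ, (div_pos ha₂ ha₁).le, fun i => ?_,
    fun j => mul_le_of_div_le_div ha₁ ha₂ (hray i₀ hi₀ j)⟩
  by_cases hi : i ∈ Vc
  · have h := hmax i hi
    rw [div_le_iff₀ (sub_pos.2 ((hVc₁ i).1 hi))] at h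
    linarith
  · have h := mul_le_of_div_le_div ha₁ ha₂ (hedge i₀ hi₀ i hi)
    have hρ : ρ * (φ₀ - φ (v i₀)) = ψ₀ - ψ (v i₀) := div_mul_cancel₀ _ ha₁.ne'
    rw [map_sub, map_sub] at h
    linarith

theorem cut_subset_cut_iff [Finite V] [Fintype E] (hnn : ∀ j, 0 ≤ ψ (r j)) (Vc : Set V)
    (hVc₁ : ∀ i, i ∈ Vc ↔ φ (v i) < φ₀) (hVc₂ : ∀ i, i ∈ Vc ↔ ψ (v i) < ψ₀) :
    {x ∈ convexHull ℝ (range v) + rayCone r | φ₀ ≤ φ x} ⊆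
        {x ∈ convexHull ℝ (range v) + rayCone r | ψ₀ ≤ ψ x} ↔
      (∀ i ∈ Vc, ∀ j, φ (r j) / (φ₀ - φ (v i)) ≤ ψ (r j) / (ψ₀ - ψ (v i))) ∧
        ∀ i ∈ Vc, ∀ k ∉ Vc,
          φ (v k - v i) / (φ₀ - φ (v i)) ≤ ψ (v k - v i) / (ψ₀ - ψ (v i)) := by
  constructor
  · intro hsub
    refine ⟨fun i hi j => ?_, fun i hi k hk => ?_⟩
    · exact ray_ratio_le_of_cut_subset φ ψ φ₀ ψ₀ v r hnn hsub ((hVc₁ i).1 hi)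
        ((hVc₂ i).1 hi) j
    · exact edge_ratio_le_of_cut_subset φ ψ φ₀ ψ₀ v r hsub ((hVc₁ i).1 hi)
        ((hVc₂ i).1 hi) (not_lt.1 ((hVc₁ k).not.1 hk))
  · rintro ⟨hray, hedge⟩ x ⟨hx, hφx⟩
    obtain ⟨ρ, hρ, hv, hr⟩ := exists_cut_multiplier φ ψ φ₀ ψ₀ v r hnn Vc hVc₁ hVc₂ hray hedge
    have h := le_of_mem_convexHull_add_rayCone v r _ hv hr hx
    simp only [LinearMap.sub_apply, LinearMap.smul_apply, smul_eq_mul] at h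
    exact ⟨hx, by nlinarith [mul_le_mul_of_nonneg_left hφx hρ]⟩

end Cuts

theorem stmt7_general {n : ℕ} {V E : Type*} [Fintype V] [Fintype E]
    (v : V → Fin n → ℝ) (r : E → Fin n → ℝ)
    (P : Set (Fin n → ℝ))
    (hP : P = convexHull ℝ (Set.range v) +
      {d | ∃ μ : E → ℝ, (∀ j, 0 ≤ μ j) ∧ d = ∑ j, μ j • r j})
    (δ1 : Fin n → ℝ) (δ10 : ℝ) (δ2 : Fin n → ℝ) (δ20 : ℝ)
    (hnn2 : ∀ j, 0 ≤ ∑ t, δ2 t * r j t)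
    (Vc : Set V)
    (hVc1 : Vc = {i | ∑ t, δ1 t * v i t < δ10})
    (hVc2 : Vc = {i | ∑ t, δ2 t * v i t < δ20}) :
    {x ∈ P | δ10 ≤ ∑ t, δ1 t * x t} ⊆ {x ∈ P | δ20 ≤ ∑ t, δ2 t * x t} ↔
      ((∀ i ∈ Vc, ∀ j : E,
          (∑ t, δ1 t * r j t) / (δ10 - ∑ t, δ1 t * v i t) ≤
            (∑ t, δ2 t * r j t) / (δ20 - ∑ t, δ2 t * v i t)) ∧
        (∀ i ∈ Vc, ∀ k ∉ Vc,
          (∑ t, δ1 t * (v k t - v i t)) / (δ10 - ∑ t, δ1 t * v i t) ≤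
            (∑ t, δ2 t * (v k t - v i t)) / (δ20 - ∑ t, δ2 t * v i t))) := by
  subst hP
  exact cut_subset_cut_iff (dotProductBilin ℝ ℝ δ1) (dotProductBilin ℝ ℝ δ2) δ10 δ20 v r hnn2 Vc
    (Set.ext_iff.1 hVc1) (Set.ext_iff.1 hVc2)

/-- Lemma `dominance_lemma`: dominance between two non-negative cuts cutting
off the same vertex set is characterized by comparison of the reciprocals of
the intersection values `α'` and `β'` (where `1/α'_{i,j} = δ^T r^j/(δ₀ − δ^T v^i)`
and `1/β'_{i,k} = δ^T(v^k − v^i)/(δ₀ − δ^T v^i)`, the convention `1/∞ = 0`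
being built in). -/
theorem stmt7 {n : ℕ} {V E : Type*} [Fintype V] [Fintype E]
    (v : V → Fin n → ℝ) (r : E → Fin n → ℝ)
    (P : Set (Fin n → ℝ))
    (hP : P = convexHull ℝ (Set.range v) +
      {d | ∃ μ : E → ℝ, (∀ j, 0 ≤ μ j) ∧ d = ∑ j, μ j • r j})
    (δ1 : Fin n → ℝ) (δ10 : ℝ) (δ2 : Fin n → ℝ) (δ20 : ℝ)
    (hnn1 : ∀ j, 0 ≤ ∑ t, δ1 t * r j t) (hnn2 : ∀ j, 0 ≤ ∑ t, δ2 t * r j t)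
    (Vc : Set V) (hVcne : Vc.Nonempty)
    (hVc1 : Vc = {i | ∑ t, δ1 t * v i t < δ10})
    (hVc2 : Vc = {i | ∑ t, δ2 t * v i t < δ20}) :
    {x ∈ P | δ10 ≤ ∑ t, δ1 t * x t} ⊆ {x ∈ P | δ20 ≤ ∑ t, δ2 t * x t} ↔
      ((∀ i ∈ Vc, ∀ j : E,
          (∑ t, δ1 t * r j t) / (δ10 - ∑ t, δ1 t * v i t) ≤
            (∑ t, δ2 t * r j t) / (δ20 - ∑ t, δ2 t * v i t)) ∧
        (∀ i ∈ Vc, ∀ k ∉ Vc,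
          (∑ t, δ1 t * (v k t - v i t)) / (δ10 - ∑ t, δ1 t * v i t) ≤
            (∑ t, δ2 t * (v k t - v i t)) / (δ20 - ∑ t, δ2 t * v i t))) :=
  stmt7_general v r P hP δ1 δ10 δ2 δ20 hnn2 Vc hVc1 hVc2
end

section
/- Let L be a mixed integer split polyhedron with V^in(L) ≠ ∅, fix k ∈ V^out(L) and λ a convex combination supported on V^in(L). Then the point v_λ + β_k(L,λ)(v^k − v_λ), where β_k(L,λ) = sup{β : v_λ + β(v^k − v_λ) ∈ L}, is a convex combination of v^k and the points v^i + β_k(L,e^i)(v^k − v^i) for i ∈ V^in(L). -/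
/-!
For `w ∈ interior L` and `x ∉ interior L`, convexity of `L` bounds every `t` with
`w + t • (x - w) ∈ L` by `1`, and closedness makes the supremum `rayExit L w x` attained.
If `x ∈ L`, the exit point of `v_λ` is `x`. Otherwise each exit parameter `b i` of `v i` is `< 1`,
so `v i` can be solved for in terms of its exit point `p i` and `x`; substituting into `v_λ` shows
that the point of parameter `1 - D⁻¹`, `D = ∑ λ i / (1 - b i)`, on the ray from `v_λ` to `x` is a
convex combination of the `p i`, hence lies in `L`. So the exit parameter of `v_λ` is at least
`1 - D⁻¹`, and its exit point lies on the segment from that point to `x`.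
-/

open Set

/-- `S ⊆ ℝ^n` is a polyhedron: a finite intersection of halfspaces. -/
def IsPolyhedron {n : ℕ} (S : Set (Fin n → ℝ)) : Prop :=
  ∃ (m : ℕ) (A : Fin m → Fin n → ℝ) (b : Fin m → ℝ),
    S = {x | ∀ i, ∑ j, A i j * x j ≤ b i}

namespace IsPolyhedron

variable {n : ℕ} {L : Set (Fin n → ℝ)}

lemma convex (h : IsPolyhedron L) : Convex ℝ L := by
  obtain ⟨m, A, b, rfl⟩ := h
  rw [ofPred_forall]
  refine convex_iInter fun i => convex_halfSpace_le ⟨fun x y => ?_, fun c x => ?_⟩ (b i)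
  · simp only [Pi.add_apply, mul_add, Finset.sum_add_distrib]
  · simp only [Pi.smul_apply, smul_eq_mul, Finset.mul_sum]
    exact Finset.sum_congr rfl fun j _ => by ring

lemma isClosed (h : IsPolyhedron L) : IsClosed L := by
  obtain ⟨m, A, b, rfl⟩ := h
  rw [ofPred_forall]
  exact isClosed_iInter fun i => isClosed_le (by fun_prop) continuous_const

end IsPolyhedron

section RayExit

variable {E : Type*} [AddCommGroup E] [Module ℝ E]

/-- The paper's `β_k(L, ·)`: the parameter at which the ray from `w` through `x` leaves `L`. -/
noncomputable def rayExit (L : Set E) (w x : E) : ℝ :=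
  sSup {t : ℝ | w + t • (x - w) ∈ L}

variable [TopologicalSpace E] [IsTopologicalAddGroup E] [ContinuousSMul ℝ E]
  {L : Set E} {w x : E} {t : ℝ}

lemma Convex.le_one_of_add_smul_sub_mem (hL : Convex ℝ L) (hw : w ∈ interior L)
    (hx : x ∉ interior L) (ht : w + t • (x - w) ∈ L) : t ≤ 1 := by
  by_contra! h1
  have ht0 : 0 < t := one_pos.trans h1
  apply hx
  have hx_eq : x = (1 - t⁻¹) • w + t⁻¹ • (w + t • (x - w)) := by
    rw [smul_add, smul_smul, inv_mul_cancel₀ ht0.ne']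
    module
  rw [hx_eq]
  exact hL.combo_interior_self_mem_interior hw ht (sub_pos.2 (inv_lt_one_of_one_lt₀ h1))
    (inv_pos.2 ht0).le (by ring)

lemma Convex.bddAbove_rayParams (hL : Convex ℝ L) (hw : w ∈ interior L) (hx : x ∉ interior L) :
    BddAbove {t : ℝ | w + t • (x - w) ∈ L} :=
  ⟨1, fun _ hs => hL.le_one_of_add_smul_sub_mem hw hx hs⟩

lemma Convex.le_rayExit (hL : Convex ℝ L) (hw : w ∈ interior L) (hx : x ∉ interior L)
    (ht : w + t • (x - w) ∈ L) : t ≤ rayExit L w x :=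
  le_csSup (hL.bddAbove_rayParams hw hx) ht

lemma Convex.rayExit_le_one (hL : Convex ℝ L) (hw : w ∈ interior L) (hx : x ∉ interior L) :
    rayExit L w x ≤ 1 :=
  csSup_le ⟨0, by simpa using interior_subset hw⟩ fun _ hs =>
    hL.le_one_of_add_smul_sub_mem hw hx hs

lemma Convex.add_rayExit_smul_mem (hL : Convex ℝ L) (hLc : IsClosed L) (hw : w ∈ interior L)
    (hx : x ∉ interior L) : w + rayExit L w x • (x - w) ∈ L :=
  (hLc.preimage (by fun_prop : Continuous fun t : ℝ => w + t • (x - w))).csSup_mem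
    ⟨0, by simpa using interior_subset hw⟩ (hL.bddAbove_rayParams hw hx)

lemma Convex.rayExit_eq_one (hL : Convex ℝ L) (hw : w ∈ interior L) (hxL : x ∈ L)
    (hx : x ∉ interior L) : rayExit L w x = 1 :=
  (hL.rayExit_le_one hw hx).antisymm (hL.le_rayExit hw hx (by simpa using hxL))

lemma Convex.rayExit_lt_one (hL : Convex ℝ L) (hLc : IsClosed L) (hw : w ∈ interior L)
    (hxL : x ∉ L) : rayExit L w x < 1 := by
  have hx : x ∉ interior L := fun h => hxL (interior_subset h)
  refine (hL.rayExit_le_one hw hx).lt_of_ne fun h1 => hxL ?_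
  simpa [h1] using hL.add_rayExit_smul_mem hLc hw hx

end RayExit

lemma add_smul_sub_mem_segment {E : Type*} [AddCommGroup E] [Module ℝ E] (w x : E) {s₀ s : ℝ}
    (hs₀ : s₀ ≤ s) (hs : s ≤ 1) :
    w + s • (x - w) ∈ segment ℝ (w + s₀ • (x - w)) x := by
  have h := (Wbtw.of_le_of_le hs₀ hs).map (AffineMap.lineMap (k := ℝ) w x)
  simp only [AffineMap.lineMap_apply_module', one_smul, sub_add_cancel] at h
  rw [mem_segment_iff_wbtw, add_comm w, add_comm w]
  exact h

lemma add_smul_sub_sum_mem_convexHull {ι E : Type*} [Fintype ι] [AddCommGroup E] [Module ℝ E]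
    (v : ι → E) (x : E) {b lam : ι → ℝ} (hb : ∀ i, b i < 1) (hlam : ∀ i, 0 ≤ lam i)
    (hsum : ∑ i, lam i = 1) :
    (∑ i, lam i • v i) + (1 - (∑ i, lam i / (1 - b i))⁻¹) • (x - ∑ i, lam i • v i) ∈
      convexHull ℝ (range fun i => v i + b i • (x - v i)) := by
  set D := ∑ i, lam i / (1 - b i)
  have hb' : ∀ i, 0 < 1 - b i := fun i => sub_pos.2 (hb i)
  have hD : 0 < D := by
    obtain ⟨i, -, hi⟩ :=
      Finset.exists_lt_of_sum_lt (show ∑ _ : ι, (0 : ℝ) < ∑ i, lam i by simp [hsum])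
    exact Finset.sum_pos' (fun j _ => div_nonneg (hlam j) (hb' j).le)
      ⟨i, Finset.mem_univ _, div_pos hi (hb' i)⟩
  set μ : ι → ℝ := fun i => lam i / (1 - b i) / D
  have hμ_sum : ∑ i, μ i = 1 := by rw [← Finset.sum_div, div_self hD.ne']
  have hμ : ∀ i, μ i • (v i + b i • (x - v i)) = (lam i / D) • v i + (μ i - lam i / D) • x := by
    intro i
    have : μ i * (1 - b i) = lam i / D := by
      simp only [μ]; field_simp [(hb' i).ne']
    rw [← this]
    module
  have hcomb : (∑ i, lam i • v i) + (1 - D⁻¹) • (x - ∑ i, lam i • v i) =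
      ∑ i, μ i • (v i + b i • (x - v i)) := by
    simp only [hμ, Finset.sum_add_distrib, ← Finset.sum_smul, Finset.sum_sub_distrib, hμ_sum,
      div_eq_inv_mul _ D, ← Finset.mul_sum, hsum, ← smul_smul, ← Finset.smul_sum]
    module
  rw [hcomb]
  exact (convex_convexHull ℝ _).sum_mem
    (fun i _ => div_nonneg (div_nonneg (hlam i) (hb' i).le) hD.le) hμ_sum
    (fun i _ => subset_convexHull ℝ _ (mem_range_self i))

/-- Lemma `beta_properties`: the intersection point
`v_λ + β_k(L,λ)(v^k − v_λ)` is a convex combination of `v^k` and the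
intersection points `v^i + β_k(L,e^i)(v^k − v^i)` for `i ∈ V^in(L)`. -/
theorem stmt11 {n : ℕ} {Vin : Type*} [Fintype Vin]
    (L : Set (Fin n → ℝ)) (hpoly : IsPolyhedron L)
    (v : Vin → Fin n → ℝ) (hv : ∀ i, v i ∈ interior L)
    (vk : Fin n → ℝ) (hvk : vk ∉ interior L)
    (lam : Vin → ℝ) (hlam : ∀ i, 0 ≤ lam i) (hsum : ∑ i, lam i = 1) :
    (∑ i, lam i • v i) +
        sSup {β : ℝ | (∑ i, lam i • v i) + β • (vk - ∑ i, lam i • v i) ∈ L} •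
          (vk - ∑ i, lam i • v i) ∈
      convexHull ℝ (insert vk
        {y | ∃ i : Vin, y = v i + sSup {β : ℝ | v i + β • (vk - v i) ∈ L} • (vk - v i)}) := by
  change _ + rayExit L _ vk • _ ∈
    convexHull ℝ (insert vk {y | ∃ i, y = v i + rayExit L (v i) vk • _})
  set exits : Set (Fin n → ℝ) := {y | ∃ i, y = v i + rayExit L (v i) vk • (vk - v i)}
  have hL := hpoly.convex
  set vl := ∑ i, lam i • v i
  have hvl : vl ∈ interior L := hL.interior.sum_mem (fun i _ => hlam i) hsum fun i _ => hv i
  have hvk_mem : vk ∈ convexHull ℝ (insert vk exits) := subset_convexHull ℝ _ (mem_insert _ _)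
  by_cases hvkL : vk ∈ L
  · simpa [hL.rayExit_eq_one hvl hvkL hvk] using hvk_mem
  have hb := fun i => hL.rayExit_lt_one hpoly.isClosed (hv i) hvkL
  have hm := add_smul_sub_sum_mem_convexHull v vk hb hlam hsum
  have hm_le := hL.le_rayExit hvl hvk (hL.convexHull_subset_iff.2
    (range_subset_iff.2 fun i => hL.add_rayExit_smul_mem hpoly.isClosed (hv i) hvk) hm)
  have hexits : range (fun i => v i + rayExit L (v i) vk • (vk - v i)) ⊆ insert vk exits := by
    rintro _ ⟨i, rfl⟩
    exact mem_insert_of_mem _ ⟨i, rfl⟩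
  have hm_hull := convexHull_mono (𝕜 := ℝ) hexits hm
  exact (convex_convexHull ℝ _).segment_subset hm_hull hvk_mem
    (add_smul_sub_mem_segment vl vk hm_le (hL.rayExit_le_one hvl hvk))
end

section
/- Fix a mixed integer split polyhedron L with V^in(L) ≠ ∅ and a convex combination λ supported on V^in(L). Let P^l(λ) = {(x, ε, μ) : x = v_λ + Σ_{k∈V^out(L)} ε_k (v^k − v_λ) + Σ_{j∈E} μ_j r^j, ε ≥ 0, Σ_k ε_k ≤ 1, μ ≥ 0}. Then conv({(x,ε,μ) ∈ P^l(λ) : x ∉ int(L)}) = {(x,ε,μ) ∈ P^l(λ) : Σ_{j∈E} μ_j/α_j(L,λ) + Σ_{k∈V^out(L)} ε_k/β_k(L,λ) ≥ 1}, i.e., Balas's intersection cut gives a complete description of the lifted relaxation. -/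
open Classical in
/-- Reciprocal of `sup S` with the convention `1/∞ = 0` (used for the
intersection-cut coefficients `1/α_j(L,λ)`). -/
noncomputable def invSup (S : Set ℝ) : ℝ :=
  if BddAbove S then (sSup S)⁻¹ else 0

/-!
Everything happens in the coefficients `(ε, μ)`: the `x`-coordinate of `P^l(λ)` is an affine
function of them, so taking convex hulls commutes with the lift, and the claim becomes
`conv {(ε, μ) : x(ε, μ) ∉ int L} = {(ε, μ) : cut ≥ 1}`.

If the cut value `c` of `(ε, μ)` is `< 1`, then `x(ε, μ)` is `(1 - c) • v_λ` plus a combination,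
with weights summing to `c`, of the exit points `v_λ + β_k (v^k - v_λ)` and `v_λ + α_j r^j` of `L`,
plus a vector along the rays with `α_j = ∞`. The first part lies in `int L` because `1 - c > 0`
and `v_λ ∈ int L`; the last one does not matter, since rays with `α_j = ∞` are recession
directions of the polyhedron, hence lineality directions.

Conversely, along each `r^j` one either moves in the lineality space or eventually leaves `L`,
so the hull of the points with `x ∉ int L` is closed under increasing `μ`. A point above the cut is
therefore such a ray added to a convex combination of the points `ε = e_k / γ_k` with
`1 ≤ γ_k ≤ 1 / β_k` and `μ = α_j e_j`, all of which have `x ∉ int L`.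
-/

open Set

section Lineality

variable {E : Type*} [AddCommGroup E] [Module ℝ E]

def linealitySpace (L : Set E) : Submodule ℝ E where
  carrier := {d | ∀ x ∈ L, ∀ t : ℝ, x + t • d ∈ L}
  add_mem' {d e} hd he x hx t := by simpa [smul_add, add_assoc] using he _ (hd x hx t) t
  zero_mem' x hx t := by simpa using hx
  smul_mem' c d hd x hx t := by simpa [smul_smul] using hd x hx (t * c)

def EscapesAlong (L : Set E) (d : E) : Prop :=
  ∀ x, ∃ T : ℝ, ∀ t, T ≤ t → x + t • d ∉ L

variable {L : Set E} {x d : E}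

theorem add_mem_iff_of_mem_linealitySpace (hd : d ∈ linealitySpace L) : x + d ∈ L ↔ x ∈ L :=
  ⟨fun h => by simpa using hd _ h (-1), fun h => by simpa using hd x h 1⟩

theorem mem_linealitySpace_of_add_smul_mem_of_sub_smul_mem
    (hadd : ∀ x ∈ L, ∀ t : ℝ, 0 ≤ t → x + t • d ∈ L)
    (hsub : ∀ x ∈ L, ∀ t : ℝ, 0 ≤ t → x - t • d ∈ L) : d ∈ linealitySpace L := fun x hx t => by
  rcases le_total 0 t with ht | ht
  · exact hadd x hx t ht
  · simpa using hsub x hx (-t) (neg_nonneg.2 ht)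

theorem add_mem_interior_iff_of_mem_linealitySpace [TopologicalSpace E] [ContinuousAdd E]
    (hd : d ∈ linealitySpace L) : x + d ∈ interior L ↔ x ∈ interior L := by
  have hL : (· + d) ⁻¹' L = L := Set.ext fun _ => add_mem_iff_of_mem_linealitySpace hd
  rw [← Set.mem_preimage (f := (· + d)), ← Homeomorph.coe_addRight,
    Homeomorph.preimage_interior, Homeomorph.coe_addRight, hL]

theorem exists_ge_add_smul_notMem_interior [TopologicalSpace E] [ContinuousAdd E]
    (hd : d ∈ linealitySpace L ∨ EscapesAlong L d)
    (hx : x ∉ interior L) (t : ℝ) : ∃ T, t ≤ T ∧ x + T • d ∉ interior L := by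
  rcases hd with hd | hesc
  · exact ⟨t, le_rfl, by
      rwa [add_mem_interior_iff_of_mem_linealitySpace (Submodule.smul_mem _ t hd)]⟩
  · obtain ⟨T, hT⟩ := hesc x
    exact ⟨max t T, le_max_left _ _, fun h => hT _ (le_max_right _ _) (interior_subset h)⟩

end Lineality

section Polyhedron

variable {n : ℕ} {L : Set (Fin n → ℝ)}

theorem IsPolyhedron.eq_iInter (hL : IsPolyhedron L) :
    ∃ (m : ℕ) (A : Fin m → Fin n → ℝ) (b : Fin m → ℝ), L = ⋂ i, {x | A i ⬝ᵥ x ≤ b i} := by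
  obtain ⟨m, A, b, rfl⟩ := hL
  exact ⟨m, A, b, by ext; simp [dotProduct]⟩

theorem IsPolyhedron.convex_s12 (hL : IsPolyhedron L) : Convex ℝ L := by
  obtain ⟨m, A, b, rfl⟩ := hL.eq_iInter
  exact convex_iInter fun i => convex_halfSpace_le (dotProductBilin ℝ ℝ (A i)).isLinear _

theorem IsPolyhedron.isClosed_s12 (hL : IsPolyhedron L) : IsClosed L := by
  obtain ⟨m, A, b, rfl⟩ := hL.eq_iInter
  exact isClosed_iInter fun i => isClosed_le (by fun_prop) continuous_const

theorem IsPolyhedron.add_smul_mem_or_escapesAlong (hL : IsPolyhedron L) (d : Fin n → ℝ) :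
    (∀ x ∈ L, ∀ t : ℝ, 0 ≤ t → x + t • d ∈ L) ∨ EscapesAlong L d := by
  obtain ⟨m, A, b, rfl⟩ := hL.eq_iInter
  simp only [EscapesAlong, mem_iInter, mem_ofPred_eq, dotProduct_add, dotProduct_smul, smul_eq_mul]
  by_cases h : ∀ i, A i ⬝ᵥ d ≤ 0
  · exact .inl fun x hx t ht i => by nlinarith [hx i, h i]
  · obtain ⟨i, hi⟩ := not_forall.mp h
    rw [not_le] at hi
    refine .inr fun x => ⟨(b i - A i ⬝ᵥ x) / (A i ⬝ᵥ d) + 1, fun t ht hmem => ?_⟩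
    have hlt : (b i - A i ⬝ᵥ x) / (A i ⬝ᵥ d) < t := by linarith
    rw [div_lt_iff₀ hi] at hlt
    linarith [hmem i]

end Polyhedron

theorem convexHull_graph_eq {k W F : Type*} [Field k] [LinearOrder k] [IsStrictOrderedRing k]
    [AddCommGroup W] [Module k W] [AddCommGroup F] [Module k F] (f : W →ᵃ[k] F) {Q : Set W}
    {P : F → Prop} {R : W → Prop} (h : convexHull k {w ∈ Q | P (f w)} = {w ∈ Q | R w}) :
    convexHull k {z : F × W | (z.1 = f z.2 ∧ z.2 ∈ Q) ∧ P z.1} =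
      {z : F × W | (z.1 = f z.2 ∧ z.2 ∈ Q) ∧ R z.2} := by
  have hgraph (S : W → Prop) : {z : F × W | (z.1 = f z.2 ∧ z.2 ∈ Q) ∧ S z.2} =
      f.prod (AffineMap.id k W) '' {w ∈ Q | S w} := by
    ext ⟨x, w⟩
    simp only [mem_image, AffineMap.coe_prod, AffineMap.coe_id, Function.prod, id,
      Prod.mk.injEq, mem_ofPred_eq]
    constructor
    · rintro ⟨⟨rfl, hw⟩, hS⟩
      exact ⟨w, ⟨hw, hS⟩, rfl, rfl⟩
    · rintro ⟨w, ⟨hw, hS⟩, rfl, rfl⟩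
      exact ⟨⟨rfl, hw⟩, hS⟩
  have hP : {z : F × W | (z.1 = f z.2 ∧ z.2 ∈ Q) ∧ P z.1} =
      f.prod (AffineMap.id k W) '' {w ∈ Q | P (f w)} := by
    rw [← hgraph]
    ext z
    exact and_congr_right fun hz => by rw [hz.1]
  rw [hP, hgraph, ← AffineMap.image_convexHull, h]

section RayExit

open Filter Topology

variable {E : Type*} [AddCommGroup E] [Module ℝ E] {L : Set E} {p x d : E}

/-- The coefficient `1 / α` of the intersection cut along the ray `p + t • d`, where
`α = sup {t ≥ 0 | p + t • d ∈ L}` and `1 / ∞ = 0`. -/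
noncomputable def cutCoeff (L : Set E) (p d : E) : ℝ :=
  invSup {t : ℝ | 0 ≤ t ∧ p + t • d ∈ L}

theorem cutCoeff_nonneg : 0 ≤ cutCoeff L p d := by
  unfold cutCoeff invSup
  split_ifs
  exacts [inv_nonneg.2 (Real.sSup_nonneg fun t ht => ht.1), le_rfl]

variable [TopologicalSpace E] [IsTopologicalAddGroup E] [ContinuousSMul ℝ E]

theorem exists_pos_add_smul_mem (hx : x ∈ interior L) (d : E) :
    ∃ t : ℝ, 0 < t ∧ x + t • d ∈ L := by
  have hray : Tendsto (fun t : ℝ => x + t • d) (𝓝 0) (𝓝 x) :=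
    (by fun_prop : Continuous fun t : ℝ => x + t • d).tendsto' 0 x (by simp)
  have hev := (hray.eventually (mem_interior_iff_mem_nhds.mp hx)).filter_mono
    (nhdsWithin_le_nhds (s := Ioi 0))
  obtain ⟨t, hmem, ht⟩ := (hev.and self_mem_nhdsWithin).exists
  exact ⟨t, ht, hmem⟩

theorem add_inv_cutCoeff_smul_mem (hL : IsClosed L) (hp : p ∈ L) :
    p + (cutCoeff L p d)⁻¹ • d ∈ L := by
  unfold cutCoeff invSup
  split_ifs with hb
  · have hcl : IsClosed {t : ℝ | 0 ≤ t ∧ p + t • d ∈ L} :=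
      isClosed_Ici.inter (hL.preimage (by fun_prop))
    rw [inv_inv]
    exact (hcl.csSup_mem ⟨0, le_rfl, by simpa using hp⟩ hb).2
  · simpa using hp

theorem add_smul_notMem_interior_of_inv_cutCoeff_le {c : ℝ} (h0 : cutCoeff L p d ≠ 0)
    (hc : (cutCoeff L p d)⁻¹ ≤ c) : p + c • d ∉ interior L := by
  intro hint
  unfold cutCoeff invSup at h0 hc
  split_ifs at h0 hc with hb
  · rw [inv_inv] at hc
    obtain ⟨t, ht, hmem⟩ := exists_pos_add_smul_mem hint d
    rw [add_assoc, ← add_smul] at hmem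
    have hle := le_csSup hb ⟨((Real.sSup_nonneg fun t ht => ht.1).trans hc).trans
      (le_add_of_nonneg_right ht.le), hmem⟩
    linarith
  · exact h0 rfl

theorem mem_linealitySpace_of_cutCoeff_eq_zero
    (hd : d ∈ linealitySpace L ∨ EscapesAlong L d)
    (hp : p ∈ interior L) (h : cutCoeff L p d = 0) : d ∈ linealitySpace L := by
  refine hd.resolve_right fun hesc => ?_
  obtain ⟨T, hT⟩ := hesc p
  have hb : BddAbove {t : ℝ | 0 ≤ t ∧ p + t • d ∈ L} :=
    ⟨T, fun t ht => not_lt.1 fun hlt => hT t hlt.le ht.2⟩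
  obtain ⟨t, ht, hmem⟩ := exists_pos_add_smul_mem hp d
  have hle := le_csSup hb ⟨ht.le, hmem⟩
  rw [cutCoeff, invSup, if_pos hb, inv_eq_zero] at h
  linarith

/-- By convexity, a point of `L` beyond `p + d` along the ray would put `p + d` in the interior. -/
theorem le_one_of_add_smul_mem (hL : Convex ℝ L) (hp : p ∈ interior L)
    (hd : p + d ∉ interior L) {t : ℝ} (ht : p + t • d ∈ L) : t ≤ 1 := by
  by_contra! h1
  have ht0 : 0 < t := one_pos.trans h1
  refine hd ?_
  convert hL.add_smul_sub_mem_interior ht hp (t := 1 - t⁻¹)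
    ⟨sub_pos.2 (inv_lt_one_of_one_lt₀ h1), sub_le_self _ (inv_nonneg.2 ht0.le)⟩ using 1
  rw [sub_add_cancel_left, smul_neg, smul_smul, sub_mul, one_mul, inv_mul_cancel₀ ht0.ne']
  module

theorem one_le_cutCoeff (hL : Convex ℝ L) (hp : p ∈ interior L) (hd : p + d ∉ interior L) :
    1 ≤ cutCoeff L p d := by
  have hb : BddAbove {t : ℝ | 0 ≤ t ∧ p + t • d ∈ L} :=
    ⟨1, fun t ht => le_one_of_add_smul_mem hL hp hd ht.2⟩
  obtain ⟨t, ht, hmem⟩ := exists_pos_add_smul_mem hp d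
  rw [cutCoeff, invSup, if_pos hb]
  exact (one_le_inv₀ (ht.trans_le (le_csSup hb ⟨ht.le, hmem⟩))).2
    (csSup_le ⟨t, ht.le, hmem⟩ fun t ht => le_one_of_add_smul_mem hL hp hd ht.2)

theorem sSup_add_smul_mem_eq_inv_cutCoeff (hL : Convex ℝ L) (hp : p ∈ interior L)
    (hd : p + d ∉ interior L) : sSup {t : ℝ | p + t • d ∈ L} = (cutCoeff L p d)⁻¹ := by
  have hb : BddAbove {t : ℝ | p + t • d ∈ L} := ⟨1, fun t ht => le_one_of_add_smul_mem hL hp hd ht⟩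
  have hb' : BddAbove {t : ℝ | 0 ≤ t ∧ p + t • d ∈ L} := hb.mono fun t ht => ht.2
  have h0 : (0 : ℝ) ∈ {t : ℝ | 0 ≤ t ∧ p + t • d ∈ L} :=
    ⟨le_rfl, by simpa using interior_subset hp⟩
  rw [cutCoeff, invSup, if_pos hb', inv_inv]
  refine le_antisymm (csSup_le ⟨0, h0.2⟩ fun t ht => ?_)
    (csSup_le_csSup hb ⟨0, h0⟩ fun t ht => ht.2)
  rcases le_total 0 t with h | h
  · exact le_csSup hb' ⟨h, ht⟩
  · exact h.trans (le_csSup hb' h0)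

end RayExit

section HullRays

variable {V : Type*} [AddCommGroup V] [Module ℝ V] {S : Set V}

theorem add_smul_mem_convexHull {u : V}
    (hS : ∀ w ∈ S, ∀ t : ℝ, 0 ≤ t → ∃ T, t ≤ T ∧ w + T • u ∈ S)
    {w : V} (hw : w ∈ convexHull ℝ S) {t : ℝ} (ht : 0 ≤ t) : w + t • u ∈ convexHull ℝ S := by
  have hray : ∀ x ∈ S, ∀ s : ℝ, 0 ≤ s → x + s • u ∈ convexHull ℝ S := by
    intro x hx s hs
    rcases hs.eq_or_lt with rfl | hs
    · simpa using subset_convexHull ℝ S hx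
    obtain ⟨T, hsT, hT⟩ := hS x hx s hs.le
    have hT0 : 0 < T := hs.trans_le hsT
    convert convex_convexHull ℝ S (subset_convexHull ℝ S hx) (subset_convexHull ℝ S hT)
      (sub_nonneg.2 (div_le_one_of_le₀ hsT hT0.le)) (div_nonneg hs.le hT0.le) (sub_add_cancel 1 _)
      using 1
    rw [smul_add, smul_smul, div_mul_cancel₀ s hT0.ne', ← add_assoc, ← add_smul, sub_add_cancel,
      one_smul]
  have hconv : Convex ℝ (⋂ s ∈ Ici (0 : ℝ), (· + s • u) ⁻¹' convexHull ℝ S) :=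
    convex_iInter₂ fun s _ => (convex_convexHull ℝ S).translate_preimage_left _
  exact mem_iInter₂.1 (convexHull_min (fun x hx => mem_iInter₂.2 (hray x hx)) hconv hw) t ht

theorem add_sum_smul_mem_convexHull {ι : Type*} (s : Finset ι) {u : ι → V}
    (hS : ∀ i ∈ s, ∀ w ∈ S, ∀ t : ℝ, 0 ≤ t → ∃ T, t ≤ T ∧ w + T • u i ∈ S)
    {w : V} (hw : w ∈ convexHull ℝ S) {c : ι → ℝ} (hc : ∀ i ∈ s, 0 ≤ c i) :
    w + ∑ i ∈ s, c i • u i ∈ convexHull ℝ S := by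
  classical
  induction s using Finset.induction_on with
  | empty => simpa
  | insert a s ha ih =>
    rw [Finset.sum_insert ha, ← add_assoc, add_right_comm]
    simp only [Finset.mem_insert, forall_eq_or_imp] at hS hc
    exact add_smul_mem_convexHull hS.1 (ih hS.2 hc.2) hc.1

end HullRays

/-- The weights of a point above the cut as a convex combination of points on the cut: weight
`ε k * γ k` on `e_k / γ k`, whose `x` lies between the exit point and `v^k` when `γ k ∈ [1, ρ k]`,
and a fraction `s` of the ray part. -/
theorem exists_sum_mul_add_mul_eq_one {ι : Type*} [Fintype ι] {ε ρ : ι → ℝ}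
    (hε : ∀ k, 0 ≤ ε k) (hρ : ∀ k, 1 ≤ ρ k) (hE : ∑ k, ε k ≤ 1) {M : ℝ} (hM : 0 ≤ M)
    (h : 1 ≤ ∑ k, ε k * ρ k + M) :
    ∃ γ : ι → ℝ, (∀ k, 1 ≤ γ k ∧ γ k ≤ ρ k) ∧
      ∃ s : ℝ, 0 ≤ s ∧ s ≤ 1 ∧ ∑ k, ε k * γ k + s * M = 1 := by
  have hEF : ∑ k, ε k ≤ ∑ k, ε k * ρ k :=
    Finset.sum_le_sum fun k _ => le_mul_of_one_le_right (hε k) (hρ k)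
  by_cases hF : 1 ≤ ∑ k, ε k * ρ k
  · set θ := (1 - ∑ k, ε k) / (∑ k, ε k * ρ k - ∑ k, ε k)
    have hθ0 : 0 ≤ θ := div_nonneg (sub_nonneg.2 hE) (sub_nonneg.2 hEF)
    have hθ1 : θ ≤ 1 := div_le_one_of_le₀ (by linarith) (by linarith)
    refine ⟨fun k => 1 + θ * (ρ k - 1), fun k => ⟨?_, ?_⟩, 0, le_rfl, zero_le_one, ?_⟩
    · nlinarith [hρ k]
    · nlinarith [hρ k]
    have hsum : ∑ k, ε k * (1 + θ * (ρ k - 1)) =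
        ∑ k, ε k + θ * (∑ k, ε k * ρ k - ∑ k, ε k) := by
      rw [← Finset.sum_sub_distrib, Finset.mul_sum, ← Finset.sum_add_distrib]
      exact Finset.sum_congr rfl fun k _ => by ring
    rw [hsum, zero_mul, add_zero]
    rcases eq_or_ne (∑ k, ε k * ρ k - ∑ k, ε k) 0 with h0 | h0
    · rw [h0, mul_zero]
      linarith
    · rw [div_mul_cancel₀ _ h0]
      ring
  · have hMpos : 0 < M := by linarith
    refine ⟨ρ, fun k => ⟨hρ k, le_rfl⟩, (1 - ∑ k, ε k * ρ k) / M,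
      div_nonneg (by linarith) hM, div_le_one_of_le₀ (by linarith) hM, ?_⟩
    rw [div_mul_cancel₀ _ hMpos.ne']
    ring

theorem Convex.add_sum_smul_sub_mem_interior {E : Type*} [AddCommGroup E] [Module ℝ E]
    [TopologicalSpace E] [IsTopologicalAddGroup E] [ContinuousSMul ℝ E] {L : Set E}
    (hL : Convex ℝ L) {p : E} (hp : p ∈ interior L) {ι : Type*} (s : Finset ι) {w : ι → ℝ}
    {q : ι → E} (hw : ∀ i ∈ s, 0 ≤ w i) (hq : ∀ i ∈ s, q i ∈ L) (hsum : ∑ i ∈ s, w i < 1) :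
    p + ∑ i ∈ s, w i • (q i - p) ∈ interior L := by
  rcases (Finset.sum_nonneg hw).eq_or_lt with h0 | hpos
  · rwa [Finset.sum_eq_zero fun i hi => by
      rw [(Finset.sum_eq_zero_iff_of_nonneg hw).1 h0.symm i hi, zero_smul], add_zero]
  have hy : ∑ i ∈ s, (w i / ∑ i ∈ s, w i) • q i ∈ L :=
    hL.sum_mem (fun i hi => div_nonneg (hw i hi) hpos.le)
      (by rw [← Finset.sum_div, div_self hpos.ne']) hq
  convert hL.combo_interior_self_mem_interior hp hy (sub_pos.2 hsum) hpos.le (sub_add_cancel 1 _)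
    using 1
  simp only [smul_sub, Finset.sum_sub_distrib, Finset.smul_sum, smul_smul,
    mul_div_cancel₀ _ hpos.ne', ← Finset.sum_smul, sub_smul, one_smul]
  abel

section LiftedRelaxation

variable {E : Type*} [AddCommGroup E] [Module ℝ E] {ι κ : Type*} [Fintype ι]

/-- The coefficients `(ε, μ)` of a point of `P^l(λ)`. -/
def liftWeights (ι κ : Type*) [Fintype ι] : Set ((ι → ℝ) × (κ → ℝ)) :=
  {w | (∀ k, 0 ≤ w.1 k) ∧ ∑ k, w.1 k ≤ 1 ∧ ∀ j, 0 ≤ w.2 j}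

theorem convex_liftWeights : Convex ℝ (liftWeights ι κ) := by
  rintro w ⟨hε, hE, hμ⟩ w' ⟨hε', hE', hμ'⟩ a b ha hb hab
  refine ⟨fun k => ?_, ?_, fun j => ?_⟩
  · have := hε k; have := hε' k
    simp only [Prod.fst_add, Prod.smul_fst, Pi.add_apply, Pi.smul_apply, smul_eq_mul]
    positivity
  · simp only [Prod.fst_add, Prod.smul_fst, Pi.add_apply, Pi.smul_apply, smul_eq_mul,
      Finset.sum_add_distrib, ← Finset.mul_sum]
    nlinarith
  · have := hμ j; have := hμ' j
    simp only [Prod.snd_add, Prod.smul_snd, Pi.add_apply, Pi.smul_apply, smul_eq_mul]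
    positivity

theorem add_inr_mem_liftWeights {w : (ι → ℝ) × (κ → ℝ)} (hw : w ∈ liftWeights ι κ)
    {ν : κ → ℝ} (hν : ∀ j, 0 ≤ ν j) : w + (0, ν) ∈ liftWeights ι κ :=
  ⟨by simpa using hw.1, by simpa using hw.2.1, fun j => add_nonneg (hw.2.2 j) (hν j)⟩

theorem inl_single_mem_liftWeights [DecidableEq ι] (k : ι) {c : ℝ} (hc₀ : 0 ≤ c) (hc₁ : c ≤ 1) :
    ((Pi.single k c : ι → ℝ), (0 : κ → ℝ)) ∈ liftWeights ι κ :=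
  ⟨(Pi.single_nonneg.2 hc₀ : (0 : ι → ℝ) ≤ Pi.single k c), by simpa using hc₁, fun _ => le_rfl⟩

theorem inr_single_mem_liftWeights [DecidableEq κ] (j : κ) {c : ℝ} (hc : 0 ≤ c) :
    ((0 : ι → ℝ), (Pi.single j c : κ → ℝ)) ∈ liftWeights ι κ :=
  ⟨fun _ => le_rfl, by simp, (Pi.single_nonneg.2 hc : (0 : κ → ℝ) ≤ Pi.single j c)⟩

variable [Fintype κ]

/-- The `x`-coordinate of the point of `P^l(λ)` with coefficients `(ε, μ)`, for `p = v_λ`,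
`u k = v^k - v_λ`. -/
def liftMap (p : E) (u : ι → E) (r : κ → E) : (ι → ℝ) × (κ → ℝ) →ᵃ[ℝ] E where
  toFun w := p + ∑ k, w.1 k • u k + ∑ j, w.2 j • r j
  linear := Fintype.linearCombination ℝ u ∘ₗ LinearMap.fst ℝ _ _ +
    Fintype.linearCombination ℝ r ∘ₗ LinearMap.snd ℝ _ _
  map_vadd' w w' := by
    simp [Fintype.linearCombination_apply, add_smul, Finset.sum_add_distrib]
    abel

noncomputable def cutValue (L : Set E) (p : E) (u : ι → E) (r : κ → E)
    (w : (ι → ℝ) × (κ → ℝ)) : ℝ :=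
  ∑ j, w.2 j * cutCoeff L p (r j) + ∑ k, w.1 k * cutCoeff L p (u k)

variable {p : E} {u : ι → E} {r : κ → E}

theorem liftMap_apply (w : (ι → ℝ) × (κ → ℝ)) :
    liftMap p u r w = p + ∑ k, w.1 k • u k + ∑ j, w.2 j • r j := rfl

theorem liftMap_add_inr (w : (ι → ℝ) × (κ → ℝ)) (ν : κ → ℝ) :
    liftMap p u r (w + (0, ν)) = liftMap p u r w + ∑ j, ν j • r j := by
  simp [liftMap_apply, add_smul, Finset.sum_add_distrib, add_assoc]

theorem liftMap_inl_single [DecidableEq ι] (k : ι) (c : ℝ) :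
    liftMap p u r (Pi.single k c, 0) = p + c • u k := by
  simp [liftMap_apply, Pi.single_apply]

theorem liftMap_inr_single [DecidableEq κ] (j : κ) (c : ℝ) :
    liftMap p u r (0, Pi.single j c) = p + c • r j := by
  simp [liftMap_apply, Pi.single_apply]

theorem isLinearMap_cutValue (L : Set E) (p : E) (u : ι → E) (r : κ → E) :
    IsLinearMap ℝ (cutValue L p u r) where
  map_add w w' := by
    simp only [cutValue, Prod.fst_add, Prod.snd_add, Pi.add_apply, add_mul, Finset.sum_add_distrib]
    ring
  map_smul c w := by
    simp only [cutValue, Prod.smul_fst, Prod.smul_snd, Pi.smul_apply, smul_eq_mul, mul_assoc,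
      ← Finset.mul_sum, mul_add]

section

variable [TopologicalSpace E] [IsTopologicalAddGroup E] {L : Set E}

theorem add_inr_mem_convexHull
    (hesc : ∀ d : E, d ∈ linealitySpace L ∨ EscapesAlong L d)
    {w : (ι → ℝ) × (κ → ℝ)}
    (hw : w ∈ convexHull ℝ {w ∈ liftWeights ι κ | liftMap p u r w ∉ interior L})
    {ν : κ → ℝ} (hν : ∀ j, 0 ≤ ν j) :
    w + (0, ν) ∈ convexHull ℝ {w ∈ liftWeights ι κ | liftMap p u r w ∉ interior L} := by
  classical
  have hν' : ((0 : ι → ℝ), ν) = ∑ j, ν j • ((0 : ι → ℝ), (Pi.single j 1 : κ → ℝ)) := by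
    ext j' <;> simp [Prod.fst_sum, Prod.snd_sum, Finset.sum_apply, Pi.single_apply]
  rw [hν']
  refine add_sum_smul_mem_convexHull Finset.univ (fun j _ w' hw' t ht => ?_) hw fun j _ => hν j
  obtain ⟨T, htT, hT⟩ := exists_ge_add_smul_notMem_interior (hesc (r j)) hw'.2 t
  have hsingle : T • ((0 : ι → ℝ), (Pi.single j 1 : κ → ℝ)) = (0, Pi.single j T) := by
    simp [← Pi.single_smul]
  refine ⟨T, htT, ?_, ?_⟩ <;> rw [hsingle]
  · exact add_inr_mem_liftWeights hw'.1 (inr_single_mem_liftWeights (ι := ι) j (ht.trans htT)).2.2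
  · simpa [liftMap_add_inr, Pi.single_apply] using hT

variable [ContinuousSMul ℝ E]

theorem add_sum_smul_mem_interior_of_sum_mul_cutCoeff_lt_one (hL : Convex ℝ L)
    (hcl : IsClosed L)
    (hesc : ∀ d : E, d ∈ linealitySpace L ∨ EscapesAlong L d)
    (hp : p ∈ interior L) {σ : Type*} [Fintype σ] {a : σ → ℝ} {d : σ → E}
    (ha : ∀ i, 0 ≤ a i) (h : ∑ i, a i * cutCoeff L p (d i) < 1) :
    p + ∑ i, a i • d i ∈ interior L := by
  set ρ := fun i => cutCoeff L p (d i)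
  -- `ρ i * (ρ i)⁻¹` is `1`, or `0` exactly on the directions with `α = ∞`
  have hlin : ∑ i, (a i - a i * ρ i * (ρ i)⁻¹) • d i ∈ linealitySpace L := by
    refine Submodule.sum_mem _ fun i _ => ?_
    by_cases hρ : ρ i = 0
    · exact Submodule.smul_mem _ _ (mem_linealitySpace_of_cutCoeff_eq_zero (hesc _) hp hρ)
    · rw [mul_assoc, mul_inv_cancel₀ hρ, mul_one, sub_self, zero_smul]
      exact Submodule.zero_mem _
  have hcomb := hL.add_sum_smul_sub_mem_interior hp Finset.univ (w := fun i => a i * ρ i)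
    (q := fun i => p + (ρ i)⁻¹ • d i) (fun i _ => mul_nonneg (ha i) cutCoeff_nonneg)
    (fun i _ => add_inv_cutCoeff_smul_mem hcl (interior_subset hp)) h
  rw [← add_mem_interior_iff_of_mem_linealitySpace hlin] at hcomb
  convert hcomb using 1
  simp only [add_sub_cancel_left, smul_smul, add_assoc, ← Finset.sum_add_distrib, ← add_smul]
  congr 2 with i
  ring_nf

theorem liftMap_mem_interior_of_cutValue_lt_one (hL : Convex ℝ L) (hcl : IsClosed L)
    (hesc : ∀ d : E, d ∈ linealitySpace L ∨ EscapesAlong L d)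
    (hp : p ∈ interior L) {w : (ι → ℝ) × (κ → ℝ)} (hw : w ∈ liftWeights ι κ)
    (h : cutValue L p u r w < 1) : liftMap p u r w ∈ interior L := by
  have := add_sum_smul_mem_interior_of_sum_mul_cutCoeff_lt_one hL hcl hesc hp
    (a := Sum.elim w.1 w.2) (d := Sum.elim u r) (by rintro (k | j); exacts [hw.1 k, hw.2.2 j])
    (by simpa [Fintype.sum_sum_type, cutValue, add_comm] using h)
  simpa [liftMap_apply, Fintype.sum_sum_type, add_assoc] using this

theorem inl_single_inv_mem [DecidableEq ι] {k : ι} {γ : ℝ}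
    (hγ : 1 ≤ γ ∧ γ ≤ cutCoeff L p (u k)) :
    ((Pi.single k γ⁻¹ : ι → ℝ), (0 : κ → ℝ)) ∈
      {w ∈ liftWeights ι κ | liftMap p u r w ∉ interior L} := by
  have hγ0 : 0 < γ := one_pos.trans_le hγ.1
  refine ⟨inl_single_mem_liftWeights k (inv_nonneg.2 hγ0.le) (inv_le_one_of_one_le₀ hγ.1), ?_⟩
  rw [liftMap_inl_single]
  exact add_smul_notMem_interior_of_inv_cutCoeff_le (one_pos.trans_le (hγ.1.trans hγ.2)).ne'
    (inv_anti₀ hγ0 hγ.2)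

theorem inr_single_inv_cutCoeff_mem [DecidableEq κ] {j : κ} (hj : cutCoeff L p (r j) ≠ 0) :
    ((0 : ι → ℝ), (Pi.single j (cutCoeff L p (r j))⁻¹ : κ → ℝ)) ∈
      {w ∈ liftWeights ι κ | liftMap p u r w ∉ interior L} := by
  refine ⟨inr_single_mem_liftWeights j (inv_nonneg.2 cutCoeff_nonneg), ?_⟩
  rw [liftMap_inr_single]
  exact add_smul_notMem_interior_of_inv_cutCoeff_le hj le_rfl

theorem mem_convexHull_of_one_le_cutValue (hL : Convex ℝ L)
    (hesc : ∀ d : E, d ∈ linealitySpace L ∨ EscapesAlong L d)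
    (hp : p ∈ interior L) (hu : ∀ k, p + u k ∉ interior L) {w : (ι → ℝ) × (κ → ℝ)}
    (hw : w ∈ liftWeights ι κ) (h : 1 ≤ cutValue L p u r w) :
    w ∈ convexHull ℝ {w ∈ liftWeights ι κ | liftMap p u r w ∉ interior L} := by
  classical
  set D := {w ∈ liftWeights ι κ | liftMap p u r w ∉ interior L}
  set ρ := fun j => cutCoeff L p (r j)
  obtain ⟨γ, hγ, s, hs0, hs1, hsum⟩ := exists_sum_mul_add_mul_eq_one hw.1
    (fun k => one_le_cutCoeff hL hp (hu k)) hw.2.1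
    (Finset.sum_nonneg fun j _ => mul_nonneg (hw.2.2 j) cutCoeff_nonneg) (h.trans_eq (add_comm _ _))
  set a : ι ⊕ κ → ℝ := Sum.elim (fun k => w.1 k * γ k) (fun j => s * w.2 j * ρ j)
  set z : ι ⊕ κ → (ι → ℝ) × (κ → ℝ) := Sum.elim (fun k => (Pi.single k (γ k)⁻¹, 0))
    (fun j => (0, Pi.single j (ρ j)⁻¹))
  have hcomb : ∑ i, a i • z i ∈ convexHull ℝ D := by
    rw [← finsum_eq_sum_of_fintype]
    refine (convex_convexHull ℝ D).finsum_mem (fun i => ?_) ?_ fun i hi => subset_convexHull ℝ D ?_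
    · rcases i with k | j
      exacts [mul_nonneg (hw.1 k) (one_pos.le.trans (hγ k).1),
        mul_nonneg (mul_nonneg hs0 (hw.2.2 j)) cutCoeff_nonneg]
    · rw [finsum_eq_sum_of_fintype, Fintype.sum_sum_type, ← hsum]
      simp [a, ρ, Finset.mul_sum, mul_assoc]
    · rcases i with k | j
      exacts [inl_single_inv_mem (hγ k),
        inr_single_inv_cutCoeff_mem fun h0 => hi (by simp [a, ρ, h0])]
  have hrest : ∀ j, 0 ≤ w.2 j - s * w.2 j * ρ j * (ρ j)⁻¹ := by
    intro j
    have := hw.2.2 j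
    rcases eq_or_ne (ρ j) 0 with h0 | h0
    · simpa [h0]
    · rw [mul_assoc, mul_inv_cancel₀ h0, mul_one]
      nlinarith
  -- `∑ i, a i • z i = (ε, s • μ')`, where `μ'` is `μ` with the coordinates of `ρ j = 0` cleared
  convert add_inr_mem_convexHull hesc hcomb hrest using 1
  ext i
  · have hγ0 : γ i ≠ 0 := (one_pos.trans_le (hγ i).1).ne'
    simp [Fintype.sum_sum_type, a, z, Prod.fst_sum, Finset.sum_apply, Pi.single_apply, mul_assoc,
      mul_inv_cancel₀ hγ0]
  · simp [Fintype.sum_sum_type, a, z, Prod.snd_sum, Finset.sum_apply, Pi.single_apply]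

theorem convexHull_liftWeights_eq (hL : Convex ℝ L) (hcl : IsClosed L)
    (hesc : ∀ d : E, d ∈ linealitySpace L ∨ EscapesAlong L d)
    (hp : p ∈ interior L) (hu : ∀ k, p + u k ∉ interior L) :
    convexHull ℝ {w ∈ liftWeights ι κ | liftMap p u r w ∉ interior L} =
      {w ∈ liftWeights ι κ | 1 ≤ cutValue L p u r w} :=
  Subset.antisymm
    (convexHull_min (fun _ hw => ⟨hw.1, not_lt.1 fun h =>
        hw.2 (liftMap_mem_interior_of_cutValue_lt_one hL hcl hesc hp hw.1 h)⟩)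
      (convex_liftWeights.inter (convex_halfSpace_ge (isLinearMap_cutValue L p u r) 1)))
    fun _ hw => mem_convexHull_of_one_le_cutValue hL hesc hp hu hw.1 hw.2

end

end LiftedRelaxation

/-- Theorem `fixed_lambda_lem`: Balas's intersection cut gives a complete
description of the lifted relaxation `R^l(L, P(λ))`. -/
theorem stmt12 {n : ℕ} {Vout Eidx : Type*} [Fintype Vout] [Fintype Eidx]
    (L : Set (Fin n → ℝ)) (hpoly : IsPolyhedron L)
    (hlin : ∀ d : Fin n → ℝ, (∀ x ∈ L, ∀ t : ℝ, 0 ≤ t → x + t • d ∈ L) →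
      ∀ x ∈ L, ∀ t : ℝ, 0 ≤ t → x - t • d ∈ L)
    (vlam : Fin n → ℝ) (hvlam : vlam ∈ interior L)
    (v : Vout → Fin n → ℝ) (hvout : ∀ k, v k ∉ interior L)
    (r : Eidx → Fin n → ℝ)
    (Pl : Set ((Fin n → ℝ) × (Vout → ℝ) × (Eidx → ℝ)))
    (hPl : Pl = {z | z.1 = vlam + ∑ k, z.2.1 k • (v k - vlam) + ∑ j, z.2.2 j • r j ∧
      (∀ k, 0 ≤ z.2.1 k) ∧ (∑ k, z.2.1 k) ≤ 1 ∧ ∀ j, 0 ≤ z.2.2 j}) :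
    convexHull ℝ {z ∈ Pl | z.1 ∉ interior L} =
      {z ∈ Pl |
        1 ≤ (∑ j, z.2.2 j * invSup {α : ℝ | 0 ≤ α ∧ vlam + α • r j ∈ L}) +
          ∑ k, z.2.1 k / sSup {β : ℝ | vlam + β • (v k - vlam) ∈ L}} := by
  have hu : ∀ k, vlam + (v k - vlam) ∉ interior L := by simpa using hvout
  have hesc (d : Fin n → ℝ) : d ∈ linealitySpace L ∨ EscapesAlong L d :=
    (hpoly.add_smul_mem_or_escapesAlong d).imp_left fun h =>
      mem_linealitySpace_of_add_smul_mem_of_sub_smul_mem h (hlin d h)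
  have hcut (w : (Vout → ℝ) × (Eidx → ℝ)) : cutValue L vlam (fun k => v k - vlam) r w =
      ∑ j, w.2 j * invSup {α : ℝ | 0 ≤ α ∧ vlam + α • r j ∈ L} +
        ∑ k, w.1 k / sSup {β : ℝ | vlam + β • (v k - vlam) ∈ L} := by
    simp only [cutValue, sSup_add_smul_mem_eq_inv_cutCoeff hpoly.convex_s12 hvlam (hu _),
      div_inv_eq_mul]
    rfl
  subst hPl
  simp only [← hcut]
  exact convexHull_graph_eq (liftMap vlam (fun k => v k - vlam) r) (P := (· ∉ interior L))
    (convexHull_liftWeights_eq hpoly.convex_s12 hpoly.isClosed_s12 hesc hvlam hu)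
end

section
/- Let L be a mixed integer split polyhedron with V^in(L) ≠ ∅. Every vertex of R(L,P) = conv({x ∈ P : x ∉ int(L)}) is of one of the following forms: (i) a vertex v^k with k ∈ V^out(L); (ii) v^i + β_{i,k}(L)(v^k − v^i) with i ∈ V^in(L), k ∈ V^out(L); (iii) v^i + α_{i,j}(L) r^j with i ∈ V^in(L) and j ∈ E with α_{i,j}(L) < ∞. Consequently, R(L,P) = conv(∪_{i ∈ V^in(L)} R(L, P(e^i))), where P(e^i) is the subcone conv({v^i} ∪ {v^k}_{k∈V^out(L)}) + cone({r^j}_{j∈E}). -/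
/-!
The main tool is separating a point outside the open convex set `int L` from it by a
continuous linear functional `f` (Hahn–Banach).

Let `x` be an extreme point of `R(L,P)`, written as `∑ λᵢ vⁱ + ∑ μⱼ rʲ`. If `x ∉ L`, any short
segment through `x` inside `P` avoids `L`, so extremality forces `x = vⁱ` whenever `λᵢ > 0`.
If `x ∈ L`, separate `x` from `int L`: a short segment through `x` inside `P` along a direction
`d` with `f d = 0` stays in the hyperplane `f = f x`, hence outside `int L`, so `d = 0`. Thus
all directions `vⁱ - x` (`λᵢ > 0`) and `rʲ` (`μⱼ > 0`) lie on one line, and the sign pattern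
of `f` along them places `x` at the exit point from `L` of a segment `[vⁱ, vᵏ]` or of a ray
`vⁱ + ℝ₊ rʲ` starting in `int L`. In the remaining sign pattern a vertex lies on the line
`x + ℝ rʲ` behind `x`, so extremality forces the ray `x + ℝ₊ rʲ` to stay in `int L`; then `rʲ`
recedes in `L`, hence so does `-rʲ` by the hypothesis on the recession cone, and `x` itself
would be interior.

For the decomposition, write `y ∈ P ∖ int L` as `∑_{V^in} λᵢ vⁱ + w` and separate `y` from
`int L` by `f`. Each segment from `vⁱ` towards the `V^out`-and-cone part `w` crosses the
hyperplane `f = f y` at a point of `P(eⁱ) ∖ int L`, and `y` is an explicit convex combination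
of these crossing points.
-/

open Pointwise

section

open Set Filter Topology

variable {W : Type*} [AddCommGroup W] [Module ℝ W]

lemma mem_openSegment_add_smul {x d : W} {s t : ℝ} (hs : s < 0) (ht : 0 < t) :
    x ∈ openSegment ℝ (x + s • d) (x + t • d) := by
  have hts : t - s ≠ 0 := by linarith
  refine ⟨t / (t - s), -s / (t - s), by apply div_pos <;> linarith,
    by apply div_pos <;> linarith, by field_simp; ring, ?_⟩
  match_scalars <;> field_simp <;> ring

lemma eq_zero_of_mem_extremePoints_of_add_smul_mem {T : Set W} {x d : W} {s t : ℝ}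
    (hx : x ∈ extremePoints ℝ T) (hs : s < 0) (ht : 0 < t) (ha : x + s • d ∈ T)
    (hb : x + t • d ∈ T) : d = 0 := by
  have := ((mem_extremePoints.1 hx).2 _ ha _ hb (mem_openSegment_add_smul hs ht)).1
  simpa [hs.ne] using this

lemma eq_zero_of_mem_extremePoints_of_eventually {T : Set W} {x d : W}
    (hx : x ∈ extremePoints ℝ T) (h : ∀ᶠ s in 𝓝 (0 : ℝ), x + s • d ∈ T) : d = 0 := by
  obtain ⟨ε, hε, hball⟩ := Metric.eventually_nhds_iff_ball.1 h
  exact eq_zero_of_mem_extremePoints_of_add_smul_mem hx (neg_lt_zero.2 (half_pos hε))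
    (half_pos hε) (hball _ (by simp [abs_of_pos hε]; linarith))
    (hball _ (by simp [abs_of_pos hε]; linarith))

def Convex.lineDirections {P : Set W} (hP : Convex ℝ P) {x : W} (hx : x ∈ P) :
    Submodule ℝ W where
  carrier := {d | ∀ᶠ s in 𝓝 (0 : ℝ), x + s • d ∈ P}
  zero_mem' := by simp [hx]
  add_mem' := by
    intro d d' hd hd'
    have h2 : Tendsto (fun s : ℝ => 2 * s) (𝓝 0) (𝓝 0) := by
      simpa using (continuous_const_mul (2 : ℝ)).tendsto 0
    filter_upwards [h2.eventually hd, h2.eventually hd'] with s hs hs'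
    convert hP hs hs' (by norm_num : (0 : ℝ) ≤ 1 / 2) (by norm_num : (0 : ℝ) ≤ 1 / 2)
      (by norm_num) using 1
    module
  smul_mem' := by
    intro c d hd
    have hc : Tendsto (fun s : ℝ => s * c) (𝓝 0) (𝓝 0) := by
      simpa using (continuous_mul_const c).tendsto 0
    filter_upwards [hc.eventually hd] with s hs
    simpa [smul_smul] using hs

theorem Convex.mem_lineDirections {P : Set W} (hP : Convex ℝ P) {x : W} (hx : x ∈ P)
    {d : W} : d ∈ hP.lineDirections hx ↔ ∀ᶠ s in 𝓝 (0 : ℝ), x + s • d ∈ P :=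
  Iff.rfl

lemma eq_zero_of_mem_lineDirections {P U : Set W} (hP : Convex ℝ P) {x : W} (hxP : x ∈ P)
    (hx : x ∈ extremePoints ℝ (convexHull ℝ {y ∈ P | y ∉ U})) (f : W →ₗ[ℝ] ℝ)
    (hf : ∀ u ∈ U, f u < f x) {d : W} (hd : d ∈ hP.lineDirections hxP) (hfd : f d = 0) :
    d = 0 := by
  refine eq_zero_of_mem_extremePoints_of_eventually hx
    ((hP.mem_lineDirections hxP).1 hd |>.mono fun s hs => ?_)
  refine subset_convexHull ℝ _ ⟨hs, fun hU => (hf _ hU).ne ?_⟩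
  simp [hfd]

lemma eq_smul_of_mem_lineDirections {P U : Set W} (hP : Convex ℝ P) {x : W} (hxP : x ∈ P)
    (hx : x ∈ extremePoints ℝ (convexHull ℝ {y ∈ P | y ∉ U})) (f : W →ₗ[ℝ] ℝ)
    (hf : ∀ u ∈ U, f u < f x) {d d' : W} (hd : d ∈ hP.lineDirections hxP)
    (hd' : d' ∈ hP.lineDirections hxP) (hfd : f d ≠ 0) : d' = (f d' / f d) • d :=
  sub_eq_zero.1 <| eq_zero_of_mem_lineDirections hP hxP hx f hf
    (sub_mem hd' (Submodule.smul_mem _ (f d' / f d) hd)) (by simp [hfd])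

lemma eventually_nonneg_add_mul {a b : ℝ} (ha : 0 ≤ a) (h : 0 < a ∨ b = 0) :
    ∀ᶠ s in 𝓝 (0 : ℝ), 0 ≤ a + s * b := by
  rcases h with ha | rfl
  · have : Tendsto (fun s : ℝ => a + s * b) (𝓝 0) (𝓝 a) :=
      (continuous_const.add (continuous_id.mul continuous_const)).tendsto' 0 a (by simp)
    exact (this.eventually (lt_mem_nhds ha)).mono fun _ hs => hs.le
  · exact Eventually.of_forall fun _ => by simpa using ha

lemma exists_pos_of_sum_add_sum_eq_zero {ι κ : Type*} [Fintype ι] [Fintype κ] {a : ι → ℝ}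
    {b : κ → ℝ} (h : ∑ i, a i + ∑ j, b j = 0) {i₀ : ι} (hi₀ : a i₀ < 0) :
    (∃ i, 0 < a i) ∨ ∃ j, 0 < b j := by
  by_contra hcon
  simp only [not_or, not_exists, not_lt] at hcon
  have ha : ∑ i, a i < 0 :=
    Finset.sum_neg' (fun i _ => hcon.1 i) ⟨i₀, Finset.mem_univ _, hi₀⟩
  linarith [Finset.sum_nonpos fun j (_ : j ∈ Finset.univ) => hcon.2 j]

lemma sign_cases_of_sum_eq_zero {ι κ : Type*} [Fintype ι] [Fintype κ] {l a : ι → ℝ}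
    {μ b : κ → ℝ} (hl : ∀ i, 0 ≤ l i) (hμ : ∀ j, 0 ≤ μ j)
    (h : ∑ i, l i * a i + ∑ j, μ j * b j = 0) {i₀ : ι} (hi₀ : 0 < l i₀)
    (ha : ∀ i, 0 < l i → a i ≠ 0) :
    (∃ i k, 0 < l i ∧ a i < 0 ∧ 0 < l k ∧ 0 < a k) ∨
    (∃ i j, 0 < l i ∧ a i < 0 ∧ 0 < μ j ∧ 0 < b j) ∨
    (∃ i j, 0 < l i ∧ 0 < a i ∧ 0 < μ j ∧ b j < 0) := by
  have hpos {c d : ℝ} (hc : 0 ≤ c) (h : 0 < c * d) : 0 < c ∧ 0 < d :=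
    (pos_and_pos_or_neg_and_neg_of_mul_pos h).resolve_right fun h' => hc.not_gt h'.1
  by_cases hneg : ∃ i, 0 < l i ∧ a i < 0
  · obtain ⟨i, hi, hai⟩ := hneg
    rcases exists_pos_of_sum_add_sum_eq_zero h (mul_neg_of_pos_of_neg hi hai) with
      ⟨k, hk⟩ | ⟨j, hj⟩
    · exact Or.inl ⟨i, k, hi, hai, hpos (hl k) hk⟩
    · exact Or.inr <| Or.inl ⟨i, j, hi, hai, hpos (hμ j) hj⟩
  · push Not at hneg
    have hai₀ : 0 < a i₀ := lt_of_le_of_ne (hneg i₀ hi₀) (ha i₀ hi₀).symm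
    have h' : ∑ i, -(l i * a i) + ∑ j, -(μ j * b j) = 0 := by
      simp only [Finset.sum_neg_distrib]; linarith
    rcases exists_pos_of_sum_add_sum_eq_zero h' (neg_neg_of_pos (mul_pos hi₀ hai₀)) with
      ⟨k, hk⟩ | ⟨j, hj⟩
    · obtain ⟨hk, hak⟩ := hpos (hl k) (by rwa [mul_neg] : 0 < l k * -a k)
      exact absurd (hneg k hk) (not_le.2 (neg_pos.1 hak))
    · obtain ⟨hj, hbj⟩ := hpos (hμ j) (by rwa [mul_neg] : 0 < μ j * -b j)
      exact Or.inr <| Or.inr ⟨i₀, j, hi₀, hai₀, hj, neg_pos.1 hbj⟩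

lemma mem_convexHull_range_iff {ι : Type*} [Fintype ι] {v : ι → W} {y : W} :
    y ∈ convexHull ℝ (range v) ↔
      ∃ w : ι → ℝ, (∀ i, 0 ≤ w i) ∧ ∑ i, w i = 1 ∧ y = ∑ i, w i • v i := by
  classical
  have hv : range v = Fintype.linearCombination ℝ v '' range (fun i => Pi.single i 1) := by
    rw [← range_comp]
    congr 1
    ext i
    simp [Fintype.linearCombination_apply, Pi.single_apply]
  rw [hv, ← LinearMap.image_convexHull, convexHull_rangle_single_eq_stdSimplex]
  simp [stdSimplex, Fintype.linearCombination_apply, eq_comm, and_assoc]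

lemma smul_add_sum_smul_mem_convexHull_insert {ι : Type*} {K : Finset ι} {a : ℝ}
    {c : ι → ℝ} (ha : 0 ≤ a) (hc : ∀ k ∈ K, 0 ≤ c k) (h1 : a + ∑ k ∈ K, c k = 1) (p : W)
    (v : ι → W) : a • p + ∑ k ∈ K, c k • v k ∈ convexHull ℝ (insert p (v '' K)) := by
  classical
  have hnone : none ∉ K.map Function.Embedding.some := by simp
  have key := (convex_convexHull ℝ (insert p (v '' K))).sum_mem
    (t := insert none (K.map Function.Embedding.some))
    (w := fun o => o.elim a c) (z := fun o => o.elim p v) ?_ ?_ ?_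
  · simpa [Finset.sum_insert hnone] using key
  · simpa [Finset.forall_mem_insert] using ⟨ha, hc⟩
  · simpa [Finset.sum_insert hnone] using h1
  · simp only [Finset.forall_mem_insert, Finset.mem_map, Function.Embedding.some_apply,
      forall_exists_index, and_imp]
    refine ⟨subset_convexHull ℝ _ (mem_insert _ _), ?_⟩
    rintro _ k hk rfl
    exact subset_convexHull ℝ _ (mem_insert_of_mem _ ⟨k, hk, rfl⟩)

section FiniteCone

variable {ι κ : Type*} [Fintype κ]

def finiteCone (r : κ → W) : Set W :=
  {d | ∃ μ : κ → ℝ, (∀ j, 0 ≤ μ j) ∧ d = ∑ j, μ j • r j}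

lemma zero_mem_finiteCone (r : κ → W) : (0 : W) ∈ finiteCone r :=
  ⟨0, fun _ => le_rfl, by simp⟩

lemma convex_finiteCone (r : κ → W) : Convex ℝ (finiteCone r) := by
  rintro _ ⟨μ, hμ, rfl⟩ _ ⟨ν, hν, rfl⟩ a b ha hb -
  refine ⟨a • μ + b • ν, fun j => ?_, ?_⟩
  · simp only [Pi.add_apply, Pi.smul_apply, smul_eq_mul]
    exact add_nonneg (mul_nonneg ha (hμ j)) (mul_nonneg hb (hν j))
  · simp [add_smul, mul_smul, Finset.sum_add_distrib, Finset.smul_sum]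

lemma convex_convexHull_add_finiteCone (v : ι → W) (r : κ → W) :
    Convex ℝ (convexHull ℝ (range v) + finiteCone r) :=
  (convex_convexHull ℝ _).add (convex_finiteCone r)

lemma mem_convexHull_add_finiteCone {v : ι → W} {r : κ → W} (i : ι) :
    v i ∈ convexHull ℝ (range v) + finiteCone r := by
  simpa using Set.add_mem_add (subset_convexHull ℝ (range v) (mem_range_self i))
    (zero_mem_finiteCone r)

lemma smul_add_smul_mem_convexHull_insert_add_finiteCone {v : ι → W} {r : κ → W}
    {K : Finset ι} {l : ι → ℝ} {μ : κ → ℝ} (hl : ∀ k, 0 ≤ l k) (hμ : ∀ j, 0 ≤ μ j) (i : ι)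
    {a b : ℝ} (ha : 0 ≤ a) (hb : 0 ≤ b) (hab : a + (∑ k ∈ K, l k) * b = 1) :
    a • v i + b • (∑ k ∈ K, l k • v k + ∑ j, μ j • r j) ∈
      convexHull ℝ (insert (v i) (v '' K)) + finiteCone r := by
  have hsplit : a • v i + b • (∑ k ∈ K, l k • v k + ∑ j, μ j • r j) =
      (a • v i + ∑ k ∈ K, (b * l k) • v k) + ∑ j, (b * μ j) • r j := by
    simp only [smul_add, Finset.smul_sum, smul_smul, add_assoc]
  rw [hsplit]
  refine Set.add_mem_add (smul_add_sum_smul_mem_convexHull_insert ha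
    (fun k _ => mul_nonneg hb (hl k)) (by rw [← Finset.mul_sum]; linarith) (v i) v)
    ⟨fun j => b * μ j, fun j => mul_nonneg hb (hμ j), rfl⟩

variable [Fintype ι] {v : ι → W} {r : κ → W}

lemma mem_convexHull_add_finiteCone_iff {y : W} :
    y ∈ convexHull ℝ (range v) + finiteCone r ↔
      ∃ (l : ι → ℝ) (μ : κ → ℝ), (∀ i, 0 ≤ l i) ∧ ∑ i, l i = 1 ∧ (∀ j, 0 ≤ μ j) ∧
        y = ∑ i, l i • v i + ∑ j, μ j • r j := by
  constructor
  · rintro ⟨a, ha, c, ⟨μ, hμ, rfl⟩, rfl⟩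
    obtain ⟨l, hl, hl1, rfl⟩ := mem_convexHull_range_iff.1 ha
    exact ⟨l, μ, hl, hl1, hμ, rfl⟩
  · rintro ⟨l, μ, hl, hl1, hμ, rfl⟩
    exact Set.add_mem_add (mem_convexHull_range_iff.2 ⟨l, hl, hl1, rfl⟩) ⟨μ, hμ, rfl⟩

variable {x : W} {l : ι → ℝ} {μ : κ → ℝ}

lemma eventually_add_smul_mem_convexHull_add_finiteCone {δl : ι → ℝ} {δμ : κ → ℝ}
    (hl : ∀ i, 0 ≤ l i) (hl1 : ∑ i, l i = 1) (hμ : ∀ j, 0 ≤ μ j)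
    (hx : x = ∑ i, l i • v i + ∑ j, μ j • r j) (hδl : ∑ i, δl i = 0)
    (hδl_supp : ∀ i, 0 < l i ∨ δl i = 0) (hδμ_supp : ∀ j, 0 < μ j ∨ δμ j = 0) :
    ∀ᶠ s in 𝓝 (0 : ℝ), x + s • (∑ i, δl i • v i + ∑ j, δμ j • r j) ∈
      convexHull ℝ (range v) + finiteCone r := by
  have hl' : ∀ᶠ s in 𝓝 (0 : ℝ), ∀ i, 0 ≤ l i + s * δl i :=
    eventually_all.2 fun i => eventually_nonneg_add_mul (hl i) (hδl_supp i)
  have hμ' : ∀ᶠ s in 𝓝 (0 : ℝ), ∀ j, 0 ≤ μ j + s * δμ j :=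
    eventually_all.2 fun j => eventually_nonneg_add_mul (hμ j) (hδμ_supp j)
  filter_upwards [hl', hμ'] with s hls hμs
  refine mem_convexHull_add_finiteCone_iff.2 ⟨_, _, hls, ?_, hμs, ?_⟩
  · simp [Finset.sum_add_distrib, ← Finset.mul_sum, hl1, hδl]
  · simp only [hx, smul_add, Finset.smul_sum, add_smul, mul_smul, Finset.sum_add_distrib]
    abel

lemma sub_mem_lineDirections (hl : ∀ i, 0 ≤ l i) (hl1 : ∑ i, l i = 1) (hμ : ∀ j, 0 ≤ μ j)
    (hx : x = ∑ i, l i • v i + ∑ j, μ j • r j) {i : ι} (hi : 0 < l i) :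
    v i - x ∈ (convex_convexHull_add_finiteCone v r).lineDirections
      (mem_convexHull_add_finiteCone_iff.2 ⟨l, μ, hl, hl1, hμ, hx⟩) := by
  classical
  have hd : ∑ k, (Pi.single i 1 - l : ι → ℝ) k • v k + ∑ j, (-μ) j • r j = v i - x := by
    simp [sub_smul, Finset.sum_sub_distrib, hx]
    abel
  rw [Convex.mem_lineDirections, ← hd]
  refine eventually_add_smul_mem_convexHull_add_finiteCone hl hl1 hμ hx (by simp [hl1])
    (fun k => ?_) (fun j => by simpa [eq_comm] using (hμ j).lt_or_eq)
  by_cases hk : k = i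
  · simp [hk, hi]
  · simpa [hk, eq_comm] using (hl k).lt_or_eq

lemma mem_lineDirections_of_pos (hl : ∀ i, 0 ≤ l i) (hl1 : ∑ i, l i = 1)
    (hμ : ∀ j, 0 ≤ μ j) (hx : x = ∑ i, l i • v i + ∑ j, μ j • r j) {j : κ} (hj : 0 < μ j) :
    r j ∈ (convex_convexHull_add_finiteCone v r).lineDirections
      (mem_convexHull_add_finiteCone_iff.2 ⟨l, μ, hl, hl1, hμ, hx⟩) := by
  classical
  have hd : ∑ i, (0 : ι → ℝ) i • v i + ∑ k, (Pi.single j 1 : κ → ℝ) k • r k = r j := by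
    simp
  rw [Convex.mem_lineDirections, ← hd]
  exact eventually_add_smul_mem_convexHull_add_finiteCone hl hl1 hμ hx (by simp)
    (fun _ => Or.inr rfl) (fun k => by by_cases hk : k = j <;> simp [hk, hj])

lemma add_smul_mem_convexHull_add_finiteCone (hl : ∀ i, 0 ≤ l i) (hl1 : ∑ i, l i = 1)
    (hμ : ∀ j, 0 ≤ μ j) (hx : x = ∑ i, l i • v i + ∑ j, μ j • r j) (j : κ) {t : ℝ}
    (ht : 0 ≤ t) : x + t • r j ∈ convexHull ℝ (range v) + finiteCone r := by
  classical
  refine mem_convexHull_add_finiteCone_iff.2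
    ⟨l, μ + Pi.single j t, hl, hl1, fun k => ?_, ?_⟩
  · by_cases hk : k = j
    · simpa [hk] using add_nonneg (hμ j) ht
    · simpa [hk] using hμ k
  · simp [add_smul, Finset.sum_add_distrib, hx, add_assoc]

end FiniteCone

section Crossing

variable {ι : Type*} {I : Finset ι} {p : ι → W} {l δ : ι → ℝ} {σ D : ℝ} {w : W}

lemma sum_weights_crossing (hD : D = ∑ i ∈ I, l i * δ i) (hD0 : D ≠ 0) :
    ∑ i ∈ I, l i * (D + σ * δ i) / D = ∑ i ∈ I, l i + σ := by
  simp only [mul_add, add_div, Finset.sum_add_distrib, mul_div_cancel_right₀ _ hD0]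
  rw [← Finset.sum_div]
  simp only [mul_left_comm _ σ, ← Finset.mul_sum, ← hD, mul_div_cancel_right₀ _ hD0]

lemma sum_smul_crossing (hD : D = ∑ i ∈ I, l i * δ i) (hD0 : D ≠ 0)
    (hden : ∀ i ∈ I, D + σ * δ i ≠ 0) :
    ∑ i ∈ I, (l i * (D + σ * δ i) / D) •
      ((D / (D + σ * δ i)) • p i + (δ i / (D + σ * δ i)) • w) = ∑ i ∈ I, l i • p i + w := by
  have hterm : ∀ i ∈ I, (l i * (D + σ * δ i) / D) •
      ((D / (D + σ * δ i)) • p i + (δ i / (D + σ * δ i)) • w) =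
        l i • p i + (l i * δ i / D) • w := fun i hi => by
    have := hden i hi
    simp only [smul_add, smul_smul]
    congr 2 <;> field_simp
  rw [Finset.sum_congr rfl hterm, Finset.sum_add_distrib, ← Finset.sum_smul, ← Finset.sum_div,
    ← hD, div_self hD0, one_smul]

lemma mem_convexHull_biUnion_of_lt (f : W →ₗ[ℝ] ℝ) (Q : ι → Set W) {y : W}
    (hl : ∀ i ∈ I, 0 ≤ l i) (hσ : 0 ≤ σ) (hsum : ∑ i ∈ I, l i + σ = 1)
    (hpos : 0 < ∑ i ∈ I, l i) (hy : y = ∑ i ∈ I, l i • p i + w)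
    (hp : ∀ i ∈ I, f (p i) < f y)
    (hQ : ∀ i ∈ I, ∀ a b : ℝ, 0 ≤ a → 0 ≤ b → a + σ * b = 1 → a • p i + b • w ∈ Q i) :
    y ∈ convexHull ℝ (⋃ i ∈ I, {z ∈ Q i | f z = f y}) := by
  set δ : ι → ℝ := fun i => f y - f (p i)
  set D := ∑ i ∈ I, l i * δ i with hD_def
  have hδ : ∀ i ∈ I, 0 < δ i := fun i hi => sub_pos.2 (hp i hi)
  have hfw : f w = σ * f y + D := by
    have : f y = ∑ i ∈ I, l i * f (p i) + f w := by simp [hy]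
    simp only [D, δ, mul_sub, Finset.sum_sub_distrib, ← Finset.sum_mul]
    linear_combination -this - f y * hsum
  have hD : 0 < D := by
    obtain ⟨i, hi, hli⟩ := Finset.exists_lt_of_sum_lt (by simpa using hpos :
      ∑ i ∈ I, (0 : ℝ) < ∑ i ∈ I, l i)
    exact Finset.sum_pos' (fun i hi => mul_nonneg (hl i hi) (hδ i hi).le)
      ⟨i, hi, mul_pos hli (hδ i hi)⟩
  have hden : ∀ i ∈ I, 0 < D + σ * δ i := fun i hi =>
    add_pos_of_pos_of_nonneg hD (mul_nonneg hσ (hδ i hi).le)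
  -- the segment from `p i` towards `w / σ` (the ray `p i + ℝ₊ w` if `σ = 0`) meets `f = f y`
  -- at the `i`-th point below
  have hmem := (convex_convexHull ℝ (⋃ i ∈ I, {z ∈ Q i | f z = f y})).sum_mem (t := I)
    (w := fun i => l i * (D + σ * δ i) / D)
    (z := fun i => (D / (D + σ * δ i)) • p i + (δ i / (D + σ * δ i)) • w)
    (fun i hi => div_nonneg (mul_nonneg (hl i hi) (hden i hi).le) hD.le)
    (by rw [sum_weights_crossing hD_def hD.ne', hsum]) fun i hi => ?_
  · rwa [sum_smul_crossing hD_def hD.ne' fun i hi => (hden i hi).ne', ← hy] at hmem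
  have h1 := (hden i hi).ne'
  refine subset_convexHull ℝ _ (mem_biUnion hi ⟨hQ i hi _ _ (div_nonneg hD.le (hden i hi).le)
    (div_nonneg (hδ i hi).le (hden i hi).le) (by field_simp), ?_⟩)
  simp only [map_add, map_smul, smul_eq_mul, hfw]
  field_simp
  ring

end Crossing

section Topological

variable [TopologicalSpace W] [IsTopologicalAddGroup W] [ContinuousSMul ℝ W]

lemma Convex.isGreatest_of_add_smul_mem_of_notMem_interior {L : Set W} (hL : Convex ℝ L)
    {p e : W} {t₀ : ℝ} (hp : p ∈ interior L) (ht₀ : 0 < t₀) (hmem : p + t₀ • e ∈ L)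
    (hnot : p + t₀ • e ∉ interior L) : IsGreatest {t | p + t • e ∈ L} t₀ := by
  refine ⟨hmem, fun t ht => le_of_not_gt fun hlt => hnot ?_⟩
  refine hL.openSegment_interior_self_subset_interior hp ht ?_
  have h := mem_openSegment_add_smul (x := p + t₀ • e) (d := e) (neg_lt_zero.2 ht₀)
    (sub_pos.2 hlt)
  simpa [add_assoc, ← add_smul] using h

lemma IsClosed.add_smul_mem_of_ray {L : Set W} (hLc : IsClosed L) (hL : Convex ℝ L)
    {x d : W} (hray : ∀ t : ℝ, 0 ≤ t → x + t • d ∈ L) {y : W} (hy : y ∈ L) {t : ℝ}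
    (ht : 0 ≤ t) : y + t • d ∈ L := by
  have hlim : Tendsto (fun T : ℝ => y + (t / T) • (x - y) + t • d) atTop
      (𝓝 (y + t • d)) := by
    have h0 : Tendsto (fun T : ℝ => t / T) atTop (𝓝 0) :=
      tendsto_const_nhds.div_atTop tendsto_id
    simpa using ((h0.smul_const (x - y)).const_add y).add_const (t • d)
  refine hLc.mem_of_tendsto hlim ((eventually_ge_atTop (max t 1)).mono fun T hTt => ?_)
  have hT : 0 < T := lt_of_lt_of_le one_pos (le_of_max_le_right hTt)
  have hseg := hL hy (hray T hT.le)
    (sub_nonneg.2 ((div_le_one hT).2 (le_of_max_le_left hTt))) (div_nonneg ht hT.le)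
    (sub_add_cancel _ _)
  convert hseg using 1
  rw [smul_add, smul_smul, div_mul_cancel₀ _ hT.ne']
  module

section ExtremePoints

variable {L P : Set W} {x : W}

lemma exit_point_of_segment (hL : Convex ℝ L)
    (hx : x ∈ extremePoints ℝ (convexHull ℝ {y ∈ P | y ∉ interior L})) (hxL : x ∈ L)
    (f : W →ₗ[ℝ] ℝ) (hf : ∀ u ∈ interior L, f u < f x) {p q : W} (hp : p ∈ P) (hq : q ∈ P)
    (ha : f (p - x) < 0) (hb : 0 < f (q - x))
    (hpq : q - x = (f (q - x) / f (p - x)) • (p - x)) :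
    p ∈ interior L ∧ q ∉ interior L ∧
      x = p + sSup {β : ℝ | p + β • (q - p) ∈ L} • (q - p) := by
  set a := f (p - x)
  set b := f (q - x)
  have hq' : q ∉ interior L := fun h => (hf q h).not_gt (by simpa [b] using hb)
  have hqx : q = x + (b / a) • (p - x) := by rw [← hpq]; abel
  have hp' : p ∈ interior L := by
    by_contra hpU
    have h0 := eq_zero_of_mem_extremePoints_of_add_smul_mem hx
      (div_neg_of_pos_of_neg hb ha) one_pos
      (by rw [← hqx]; exact subset_convexHull ℝ _ ⟨hq, hq'⟩)
      (by rw [one_smul, add_sub_cancel]; exact subset_convexHull ℝ _ ⟨hp, hpU⟩)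
    exact ha.ne (by rw [show a = f (p - x) from rfl, h0, map_zero])
  have hx_eq : x = p + (a / (a - b)) • (q - p) := by
    have ha0 : a ≠ 0 := ha.ne
    have hab : a - b ≠ 0 := by linarith
    rw [hqx]
    match_scalars <;> field_simp <;> ring
  have hgr := hL.isGreatest_of_add_smul_mem_of_notMem_interior hp'
    (div_pos_of_neg_of_neg ha (by linarith)) (hx_eq ▸ hxL)
    (hx_eq ▸ (extremePoints_convexHull_subset hx).2)
  exact ⟨hp', hq', by rwa [hgr.csSup_eq]⟩

lemma exit_point_of_ray (hL : Convex ℝ L)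
    (hx : x ∈ extremePoints ℝ (convexHull ℝ {y ∈ P | y ∉ interior L})) (hxL : x ∈ L)
    (f : W →ₗ[ℝ] ℝ) (hf : ∀ u ∈ interior L, f u < f x) {p d : W} (hp : p ∈ P)
    (hd : x + d ∈ P) (ha : f (p - x) < 0) (hfd : 0 < f d)
    (hpd : p - x = (f (p - x) / f d) • d) :
    p ∈ interior L ∧ BddAbove {α : ℝ | 0 ≤ α ∧ p + α • d ∈ L} ∧
      x = p + sSup {α : ℝ | 0 ≤ α ∧ p + α • d ∈ L} • d := by
  set a := f (p - x)
  have hd' : x + d ∉ interior L := fun h => (hf _ h).not_gt (by simpa using hfd)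
  have hpx : p = x + (a / f d) • d := by rw [← hpd]; abel
  have hp' : p ∈ interior L := by
    by_contra hpU
    have h0 := eq_zero_of_mem_extremePoints_of_add_smul_mem hx
      (div_neg_of_neg_of_pos ha hfd) one_pos
      (by rw [← hpx]; exact subset_convexHull ℝ _ ⟨hp, hpU⟩)
      (by rw [one_smul]; exact subset_convexHull ℝ _ ⟨hd, hd'⟩)
    simp [h0] at hfd
  have hx_eq : x = p + (-a / f d) • d := by
    rw [hpx, neg_div, neg_smul]
    abel
  have ht₀ : 0 < -a / f d := div_pos (neg_pos.2 ha) hfd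
  have hgr := hL.isGreatest_of_add_smul_mem_of_notMem_interior hp' ht₀ (hx_eq ▸ hxL)
    (hx_eq ▸ (extremePoints_convexHull_subset hx).2)
  have hgr' : IsGreatest {α : ℝ | 0 ≤ α ∧ p + α • d ∈ L} (-a / f d) :=
    ⟨⟨ht₀.le, hgr.1⟩, fun t ht => hgr.2 ht.2⟩
  exact ⟨hp', hgr'.bddAbove, by rwa [hgr'.csSup_eq]⟩

lemma false_of_backward_ray (hLc : IsClosed L) (hL : Convex ℝ L)
    (hlin : ∀ d : W, (∀ x ∈ L, ∀ t : ℝ, 0 ≤ t → x + t • d ∈ L) →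
      ∀ x ∈ L, ∀ t : ℝ, 0 ≤ t → x - t • d ∈ L)
    (hx : x ∈ extremePoints ℝ (convexHull ℝ {y ∈ P | y ∉ interior L})) (hxL : x ∈ L)
    (f : W →ₗ[ℝ] ℝ) (hf : ∀ u ∈ interior L, f u < f x) {p d : W} (hp : p ∈ P)
    (hd : ∀ t : ℝ, 0 ≤ t → x + t • d ∈ P) (ha : 0 < f (p - x)) (hfd : f d < 0)
    (hpd : p - x = (f (p - x) / f d) • d) : False := by
  by_cases hray : ∀ t : ℝ, 0 < t → x + t • d ∈ interior L
  · have hrayL : ∀ t : ℝ, 0 ≤ t → x + t • d ∈ L := fun t ht =>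
      ht.eq_or_lt.elim (fun h => by simpa [← h] using hxL) fun h => interior_subset (hray t h)
    have hback := hlin d (fun y hy t ht => hLc.add_smul_mem_of_ray hL hrayL hy ht) x hxL 1
      zero_le_one
    refine (extremePoints_convexHull_subset hx).2
      (hL.openSegment_self_interior_subset_interior hback (hray 1 one_pos) ?_)
    simpa [sub_eq_add_neg] using
      mem_openSegment_add_smul (x := x) (d := d) neg_one_lt_zero one_pos
  · obtain ⟨t, ht, htU⟩ := not_forall₂.1 hray
    have hpx : p = x + (f (p - x) / f d) • d := by rw [← hpd]; abel
    have hpU : p ∉ interior L := fun h => (hf p h).not_gt (by simpa using ha)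
    have h0 := eq_zero_of_mem_extremePoints_of_add_smul_mem hx
      (div_neg_of_pos_of_neg ha hfd) ht
      (by rw [← hpx]; exact subset_convexHull ℝ _ ⟨hp, hpU⟩)
      (subset_convexHull ℝ _ ⟨hd t ht.le, htU⟩)
    simp [h0] at hfd

variable {ι κ : Type*} [Fintype ι] [Fintype κ] {v : ι → W} {r : κ → W}

theorem mem_extremePoints_cases_of_mem (hLc : IsClosed L) (hL : Convex ℝ L)
    (hlin : ∀ d : W, (∀ x ∈ L, ∀ t : ℝ, 0 ≤ t → x + t • d ∈ L) →
      ∀ x ∈ L, ∀ t : ℝ, 0 ≤ t → x - t • d ∈ L)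
    (hx : x ∈ extremePoints ℝ
      (convexHull ℝ {y ∈ convexHull ℝ (range v) + finiteCone r | y ∉ interior L}))
    (hxL : x ∈ L) (f : W →ₗ[ℝ] ℝ) (hf : ∀ u ∈ interior L, f u < f x)
    {l : ι → ℝ} {μ : κ → ℝ} (hl : ∀ i, 0 ≤ l i) (hl1 : ∑ i, l i = 1) (hμ : ∀ j, 0 ≤ μ j)
    (hxr : x = ∑ i, l i • v i + ∑ j, μ j • r j) :
    (∃ k, v k ∉ interior L ∧ x = v k) ∨
    (∃ i k, v i ∈ interior L ∧ v k ∉ interior L ∧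
      x = v i + sSup {β : ℝ | v i + β • (v k - v i) ∈ L} • (v k - v i)) ∨
    (∃ i j, v i ∈ interior L ∧ BddAbove {α : ℝ | 0 ≤ α ∧ v i + α • r j ∈ L} ∧
      x = v i + sSup {α : ℝ | 0 ≤ α ∧ v i + α • r j ∈ L} • r j) := by
  have hP := convex_convexHull_add_finiteCone v r
  have hxP := mem_convexHull_add_finiteCone_iff.2 ⟨l, μ, hl, hl1, hμ, hxr⟩
  have hvD := fun i (hi : 0 < l i) => sub_mem_lineDirections hl hl1 hμ hxr hi
  have hrD := fun j (hj : 0 < μ j) => mem_lineDirections_of_pos hl hl1 hμ hxr hj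
  have hcol := fun {d d'} => eq_smul_of_mem_lineDirections hP hxP hx f hf (d := d) (d' := d')
  have hsum : ∑ i, l i * f (v i - x) + ∑ j, μ j * f (r j) = 0 := by
    have hfx : f x = ∑ i, l i * f (v i) + ∑ j, μ j * f (r j) := by simp [hxr]
    simp only [map_sub, mul_sub, Finset.sum_sub_distrib, ← Finset.sum_mul, hl1, one_mul]
    linarith
  by_cases hA : ∃ i, 0 < l i ∧ f (v i - x) = 0
  · obtain ⟨i, hi, hfi⟩ := hA
    have h0 := sub_eq_zero.1 (eq_zero_of_mem_lineDirections hP hxP hx f hf (hvD i hi) hfi)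
    exact Or.inl ⟨i, h0 ▸ (extremePoints_convexHull_subset hx).2, h0.symm⟩
  push Not at hA
  obtain ⟨i₀, -, hi₀⟩ :=
    Finset.exists_lt_of_sum_lt (by simp [hl1] : ∑ _ : ι, (0 : ℝ) < ∑ i, l i)
  rcases sign_cases_of_sum_eq_zero hl hμ hsum hi₀ hA with
    ⟨i, k, hi, hai, hk, hak⟩ | ⟨i, j, hi, hai, hj, hbj⟩ | ⟨i, j, hi, hai, hj, hbj⟩
  · exact Or.inr <| Or.inl ⟨i, k, exit_point_of_segment hL hx hxL f hf
      (mem_convexHull_add_finiteCone i) (mem_convexHull_add_finiteCone k) hai hak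
      (hcol (hvD i hi) (hvD k hk) hai.ne)⟩
  · exact Or.inr <| Or.inr ⟨i, j, exit_point_of_ray hL hx hxL f hf
      (mem_convexHull_add_finiteCone i)
      (by simpa using add_smul_mem_convexHull_add_finiteCone hl hl1 hμ hxr j zero_le_one)
      hai hbj (hcol (hrD j hj) (hvD i hi) hbj.ne')⟩
  · exact (false_of_backward_ray hLc hL hlin hx hxL f hf (mem_convexHull_add_finiteCone i)
      (fun t ht => add_smul_mem_convexHull_add_finiteCone hl hl1 hμ hxr j ht) hai hbj
      (hcol (hrD j hj) (hvD i hi) hbj.ne)).elim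

theorem mem_extremePoints_cases (hLc : IsClosed L) (hL : Convex ℝ L)
    (hlin : ∀ d : W, (∀ x ∈ L, ∀ t : ℝ, 0 ≤ t → x + t • d ∈ L) →
      ∀ x ∈ L, ∀ t : ℝ, 0 ≤ t → x - t • d ∈ L)
    (hx : x ∈ extremePoints ℝ
      (convexHull ℝ {y ∈ convexHull ℝ (range v) + finiteCone r | y ∉ interior L})) :
    (∃ k, v k ∉ interior L ∧ x = v k) ∨
    (∃ i k, v i ∈ interior L ∧ v k ∉ interior L ∧
      x = v i + sSup {β : ℝ | v i + β • (v k - v i) ∈ L} • (v k - v i)) ∨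
    (∃ i j, v i ∈ interior L ∧ BddAbove {α : ℝ | 0 ≤ α ∧ v i + α • r j ∈ L} ∧
      x = v i + sSup {α : ℝ | 0 ≤ α ∧ v i + α • r j ∈ L} • r j) := by
  obtain ⟨hxP, hxU⟩ := extremePoints_convexHull_subset hx
  obtain ⟨l, μ, hl, hl1, hμ, hxr⟩ := mem_convexHull_add_finiteCone_iff.1 hxP
  by_cases hxL : x ∈ L
  · obtain ⟨f, hf⟩ := geometric_hahn_banach_open_point hL.interior isOpen_interior hxU
    exact mem_extremePoints_cases_of_mem hLc hL hlin hx hxL f hf hl hl1 hμ hxr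
  obtain ⟨i, -, hi⟩ :=
    Finset.exists_lt_of_sum_lt (by simp [hl1] : ∑ _ : ι, (0 : ℝ) < ∑ i, l i)
  have hout : ∀ᶠ s in 𝓝 (0 : ℝ), x + s • (v i - x) ∉ L :=
    ((continuous_const.add (continuous_id.smul continuous_const)).tendsto' 0 x
      (by simp)).eventually (hLc.isOpen_compl.mem_nhds hxL)
  have h0 := sub_eq_zero.1 <| eq_zero_of_mem_extremePoints_of_eventually hx <|
    ((sub_mem_lineDirections hl hl1 hμ hxr hi).and hout).mono fun s hs =>
      subset_convexHull ℝ _ ⟨hs.1, fun h => hs.2 (interior_subset h)⟩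
  exact Or.inl ⟨i, h0 ▸ hxU, h0.symm⟩

end ExtremePoints

variable {ι κ : Type*} [Fintype ι] [Fintype κ] {U : Set W}

lemma mem_convexHull_biUnion_of_notMem (hU : Convex ℝ U) (hUo : IsOpen U) {v : ι → W}
    {r : κ → W} (hin : ∃ i, v i ∈ U) {y : W}
    (hy : y ∈ convexHull ℝ (range v) + finiteCone r) (hyU : y ∉ U) :
    y ∈ convexHull ℝ (⋃ i ∈ {i | v i ∈ U},
      convexHull ℝ {z ∈ convexHull ℝ (insert (v i) (v '' {k | v k ∉ U})) + finiteCone r |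
        z ∉ U}) := by
  classical
  obtain ⟨l, μ, hl, hl1, hμ, rfl⟩ := mem_convexHull_add_finiteCone_iff.1 hy
  set I := Finset.univ.filter fun i => v i ∈ U
  set O := Finset.univ.filter fun i => v i ∉ U
  have hO : v '' {k | v k ∉ U} = v '' ↑O := by simp [O]
  set w := ∑ k ∈ O, l k • v k + ∑ j, μ j • r j
  have hsplit : ∑ i ∈ I, l i + ∑ k ∈ O, l k = 1 := by
    rw [Finset.sum_filter_add_sum_filter_not, hl1]
  have hyw : ∑ i, l i • v i + ∑ j, μ j • r j = ∑ i ∈ I, l i • v i + w := by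
    rw [← Finset.sum_filter_add_sum_filter_not Finset.univ (fun i => v i ∈ U), add_assoc]
  have hT : ∀ i, v i ∈ U → ∀ z ∈ convexHull ℝ (insert (v i) (v '' O)) + finiteCone r, z ∉ U →
      z ∈ convexHull ℝ (⋃ i ∈ {i | v i ∈ U},
        convexHull ℝ {z ∈ convexHull ℝ (insert (v i) (v '' {k | v k ∉ U})) + finiteCone r |
          z ∉ U}) := fun i hi z hz hzU =>
    subset_convexHull ℝ _ (mem_biUnion hi (subset_convexHull ℝ _ ⟨hO ▸ hz, hzU⟩))
  rw [hyw] at hyU ⊢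
  by_cases hs : ∑ i ∈ I, l i = 0
  · obtain ⟨i₀, hi₀⟩ := hin
    have hw : ∑ i ∈ I, l i • v i = 0 := Finset.sum_eq_zero fun i hi => by
      rw [(Finset.sum_eq_zero_iff_of_nonneg fun i _ => hl i).1 hs i hi, zero_smul]
    rw [hw, zero_add] at hyU ⊢
    have hwQ := smul_add_smul_mem_convexHull_insert_add_finiteCone (v := v) (r := r) (K := O)
      hl hμ i₀ le_rfl zero_le_one (by rw [zero_add, mul_one]; linarith)
    exact hT i₀ hi₀ w (by simpa using hwQ) hyU
  · obtain ⟨f, hf⟩ := geometric_hahn_banach_open_point hU hUo hyU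
    refine convexHull_min ?_ (convex_convexHull ℝ _) (mem_convexHull_biUnion_of_lt
      (f : W →ₗ[ℝ] ℝ) (fun i => convexHull ℝ (insert (v i) (v '' O)) + finiteCone r)
      (fun i _ => hl i) (Finset.sum_nonneg fun k _ => hl k)
      hsplit (lt_of_le_of_ne (Finset.sum_nonneg fun i _ => hl i) (Ne.symm hs)) rfl
      (fun i hi => hf _ (by simpa [I] using hi))
      fun i _ _ _ ha hb hab => smul_add_smul_mem_convexHull_insert_add_finiteCone hl hμ i ha hb
        hab)
    simp only [iUnion_subset_iff]
    intro i hi z hz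
    exact hT i (by simpa [I] using hi) z hz.1 fun hzU => (hf z hzU).ne hz.2

theorem convexHull_diff_eq_convexHull_biUnion (hU : Convex ℝ U) (hUo : IsOpen U) (v : ι → W)
    (r : κ → W) (hin : ∃ i, v i ∈ U) :
    convexHull ℝ {y ∈ convexHull ℝ (range v) + finiteCone r | y ∉ U} =
      convexHull ℝ (⋃ i ∈ {i | v i ∈ U},
        convexHull ℝ {z ∈ convexHull ℝ (insert (v i) (v '' {k | v k ∉ U})) + finiteCone r |
          z ∉ U}) := by
  refine Subset.antisymm (convexHull_min (fun y hy => ?_) (convex_convexHull ℝ _))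
    (convexHull_min (iUnion₂_subset fun i _ => convexHull_mono fun z hz => ⟨?_, hz.2⟩)
      (convex_convexHull ℝ _))
  · exact mem_convexHull_biUnion_of_notMem hU hUo hin hy.1 hy.2
  · exact Set.add_subset_add_right (convexHull_mono (insert_subset (mem_range_self i)
      (image_subset_range _ _))) hz.1

end Topological

theorem IsPolyhedron.isClosed_s13 {n : ℕ} {L : Set (Fin n → ℝ)} (h : IsPolyhedron L) :
    IsClosed L := by
  obtain ⟨m, A, b, rfl⟩ := h
  simp only [ofPred_forall]
  exact isClosed_iInter fun i => isClosed_le (by fun_prop) continuous_const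

theorem IsPolyhedron.convex_s13 {n : ℕ} {L : Set (Fin n → ℝ)} (h : IsPolyhedron L) :
    Convex ℝ L := by
  obtain ⟨m, A, b, rfl⟩ := h
  simp only [ofPred_forall]
  refine convex_iInter fun i => convex_halfSpace_le ⟨fun x y => ?_, fun c x => ?_⟩ (b i)
  · simp [mul_add, Finset.sum_add_distrib]
  · simp [Finset.mul_sum, mul_left_comm]

end

theorem stmt13_general {n : ℕ} {V E : Type*} [Fintype V] [Fintype E]
    (v : V → Fin n → ℝ) (r : E → Fin n → ℝ)
    (P : Set (Fin n → ℝ))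
    (hP : P = convexHull ℝ (Set.range v) +
      {d | ∃ μ : E → ℝ, (∀ j, 0 ≤ μ j) ∧ d = ∑ j, μ j • r j})
    (L : Set (Fin n → ℝ)) (hpoly : IsPolyhedron L)
    (hlin : ∀ d : Fin n → ℝ, (∀ x ∈ L, ∀ t : ℝ, 0 ≤ t → x + t • d ∈ L) →
      ∀ x ∈ L, ∀ t : ℝ, 0 ≤ t → x - t • d ∈ L)
    (hVin : ∃ i, v i ∈ interior L) :
    (∀ x ∈ Set.extremePoints ℝ (convexHull ℝ {y ∈ P | y ∉ interior L}),
      (∃ k, v k ∉ interior L ∧ x = v k) ∨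
      (∃ i k, v i ∈ interior L ∧ v k ∉ interior L ∧
        x = v i + sSup {β : ℝ | v i + β • (v k - v i) ∈ L} • (v k - v i)) ∨
      (∃ i j, v i ∈ interior L ∧ BddAbove {α : ℝ | 0 ≤ α ∧ v i + α • r j ∈ L} ∧
        x = v i + sSup {α : ℝ | 0 ≤ α ∧ v i + α • r j ∈ L} • r j)) ∧
    convexHull ℝ {y ∈ P | y ∉ interior L} =
      convexHull ℝ (⋃ i ∈ {i : V | v i ∈ interior L},
        convexHull ℝ {y ∈ (convexHull ℝ (insert (v i) (v '' {k | v k ∉ interior L})) +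
            {d | ∃ μ : E → ℝ, (∀ j, 0 ≤ μ j) ∧ d = ∑ j, μ j • r j}) |
          y ∉ interior L}) := by
  subst hP
  exact ⟨fun x hx => mem_extremePoints_cases hpoly.isClosed_s13 hpoly.convex_s13 hlin hx,
    convexHull_diff_eq_convexHull_biUnion hpoly.convex_s13.interior isOpen_interior v r hVin⟩

/-- Lemma `rel_descr` and Corollary `x_space_char`: characterization of the
vertices of `R(L,P)` and the decomposition
`R(L,P) = conv(∪_{i ∈ V^in(L)} R(L,P(e^i)))`. -/
theorem stmt13 {n : ℕ} {V E : Type*} [Fintype V] [Fintype E]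
    (v : V → Fin n → ℝ) (r : E → Fin n → ℝ)
    (hvQ : ∀ i t, ∃ q : ℚ, v i t = (q : ℝ))
    (hrZ : ∀ j t, ∃ z : ℤ, r j t = (z : ℝ))
    (P : Set (Fin n → ℝ))
    (hP : P = convexHull ℝ (Set.range v) +
      {d | ∃ μ : E → ℝ, (∀ j, 0 ≤ μ j) ∧ d = ∑ j, μ j • r j})
    (L : Set (Fin n → ℝ)) (hpoly : IsPolyhedron L)
    (hlin : ∀ d : Fin n → ℝ, (∀ x ∈ L, ∀ t : ℝ, 0 ≤ t → x + t • d ∈ L) →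
      ∀ x ∈ L, ∀ t : ℝ, 0 ≤ t → x - t • d ∈ L)
    (hVin : ∃ i, v i ∈ interior L) :
    (∀ x ∈ Set.extremePoints ℝ (convexHull ℝ {y ∈ P | y ∉ interior L}),
      (∃ k, v k ∉ interior L ∧ x = v k) ∨
      (∃ i k, v i ∈ interior L ∧ v k ∉ interior L ∧
        x = v i + sSup {β : ℝ | v i + β • (v k - v i) ∈ L} • (v k - v i)) ∨
      (∃ i j, v i ∈ interior L ∧ BddAbove {α : ℝ | 0 ≤ α ∧ v i + α • r j ∈ L} ∧
        x = v i + sSup {α : ℝ | 0 ≤ α ∧ v i + α • r j ∈ L} • r j)) ∧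
    convexHull ℝ {y ∈ P | y ∉ interior L} =
      convexHull ℝ (⋃ i ∈ {i : V | v i ∈ interior L},
        convexHull ℝ {y ∈ (convexHull ℝ (insert (v i) (v '' {k | v k ∉ interior L})) +
            {d | ∃ μ : E → ℝ, (∀ j, 0 ≤ μ j) ∧ d = ∑ j, μ j • r j}) |
          y ∉ interior L}) :=
  stmt13_general v r P hP L hpoly hlin hVin
end
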